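/- arXiv:1912.09548 — 7 statements merged into one kernel-verified Lean document; each statement's English description precedes it below -/
import Mathlib

section
/- Let R, r be positive real numbers and a, b real numbers such that the three real numbers π·log R, π·log r, and a·log r − b·log R are linearly independent over ℚ. Set z = R·e^{ia} and w = r·e^{ib}. Then the set X = { z^m · w^n : m, n ∈ ℤ } is dense in ℂ. -/
/-!
`X` is the image under `exp` of the subgroup `Γ ⊆ ℂ` generated by `log R + a i`, `log r + b i`
and `2πi`, and `exp` maps dense sets to dense sets, so it suffices that `Γ` is dense.

No nonzero `ℝ`-linear functional `f` maps `Γ` into a cyclic group `ℤ c`: eliminating `f 1` and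
`f i` from the values of `f` on the generators would give a relation with coefficients in `ℤ c`
between `π log R`, `π log r` and `a log r - b log R`. So every `f '' Γ` is dense in `ℝ`. For
`f = re` this gives infinitely many points of `Γ` with real part in `(0, 1)`, and reducing their
imaginary parts modulo `2π` puts them in a bounded box; so `0` is an accumulation point of `Γ`.
Rescaled small elements of `Γ` then fill a line `ℝ u` inside the closure of `Γ`, and the density
of `Γ` under the functional whose kernel is that line makes `Γ` dense.
-/

open Set Filter Topology Complex
open scoped Real

theorem LinearIndependent.eq_zero_of_forall_mem_zmultiples {ι K : Type*} [Fintype ι] [Field K]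
    [CharZero K] {v : ι → K} (hv : LinearIndependent ℚ v) {p : ι → K} {c : K}
    (hp : ∀ i, p i ∈ AddSubgroup.zmultiples c) (h : ∑ i, p i * v i = 0) : p = 0 := by
  choose n hn using hp
  obtain rfl : p = fun i => (n i : K) * c := funext fun i => by simp [← hn i, zsmul_eq_mul]
  rcases eq_or_ne c 0 with rfl | hc
  · ext; simp
  have hn0 : ∀ i, (n i : ℚ) = 0 := by
    refine Fintype.linearIndependent_iff.mp hv (fun i => (n i : ℚ)) ?_
    have : c * ∑ i, (n i : K) * v i = 0 := by
      rw [Finset.mul_sum, ← h]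
      exact Finset.sum_congr rfl fun i _ => by ring
    simpa [Rat.smul_def, hc] using this
  ext i
  simp [Int.cast_eq_zero.mp (hn0 i)]

theorem tendsto_floor_div_mul_nhdsGT (t : ℝ) :
    Tendsto (fun ε : ℝ => (⌊t / ε⌋ : ℝ) * ε) (𝓝[>] 0) (𝓝 t) := by
  refine tendsto_of_tendsto_of_tendsto_of_le_of_le' (g := fun ε => t - ε) (h := fun _ => t) ?_
    tendsto_const_nhds ?_ ?_
  · simpa using ((continuous_sub_left t).tendsto 0).mono_left nhdsWithin_le_nhds
  · filter_upwards [self_mem_nhdsWithin] with ε (hε : 0 < ε)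
    have := Int.sub_one_lt_floor (t / ε)
    rw [div_sub_one hε.ne', div_lt_iff₀ hε] at this
    linarith
  · filter_upwards [self_mem_nhdsWithin] with ε (hε : 0 < ε)
    exact (le_div_iff₀ hε).mp (Int.floor_le _)

theorem Dense.infinite_inter_of_isOpen {X : Type*} [TopologicalSpace X] [T1Space X] {s U : Set X}
    (hs : Dense s) (hU : IsOpen U) (hUinf : U.Infinite) : (U ∩ s).Infinite := fun hfin =>
  hUinf <| hfin.subset <| hfin.isClosed.closure_eq ▸ hs.open_subset_closure_inter hU

namespace AddSubgroup

theorem dense_of_ker_le_topologicalClosure {E : Type*} [AddCommGroup E] [Module ℝ E]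
    [TopologicalSpace E] [IsTopologicalAddGroup E] [ContinuousSMul ℝ E] {Γ : AddSubgroup E}
    {f : E →ₗ[ℝ] ℝ} (hf : f ≠ 0)
    (hker : (LinearMap.ker f).toAddSubgroup ≤ Γ.topologicalClosure) (hdense : Dense (f '' Γ)) :
    Dense (Γ : Set E) := by
  have hsub : f ⁻¹' (f '' Γ) ⊆ Γ.topologicalClosure := by
    rintro x ⟨g, hg, hgx⟩
    have hxg : x - g ∈ LinearMap.ker f := by simp [hgx]
    rw [SetLike.mem_coe, ← add_sub_cancel g x]
    exact Γ.topologicalClosure.add_mem (Γ.le_topologicalClosure hg) (hker hxg)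
  exact dense_closure.mp <| (hdense.preimage
    (f.isOpenMap_of_finiteDimensional (LinearMap.surjective_of_ne_zero hf))).mono hsub

variable {E : Type*} [NormedAddCommGroup E] [ProperSpace E]

theorem accPt_zero_of_infinite_inter (Γ : AddSubgroup E) {K : Set E}
    (hK : Bornology.IsBounded K) (hinf : (K ∩ Γ).Infinite) : AccPt (0 : E) (𝓟 Γ) := by
  obtain ⟨r, hr⟩ := hK.subset_closedBall 0
  obtain ⟨x, -, hx⟩ := hinf.exists_accPt_of_subset_isCompact (isCompact_closedBall 0 r)
    (inter_subset_left.trans hr)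
  refine accPt_iff_nhds.mpr fun U hU => ?_
  obtain ⟨ε, hε, hεU⟩ := Metric.mem_nhds_iff.mp hU
  obtain ⟨g, ⟨hgx, -, hgΓ⟩, hgx'⟩ :=
    accPt_iff_nhds.mp hx _ (Metric.ball_mem_nhds x (half_pos hε))
  obtain ⟨h, ⟨hhx, -, hhΓ⟩, -⟩ :=
    accPt_iff_nhds.mp hx _ (Metric.ball_mem_nhds x (dist_pos.mpr hgx'))
  rw [Metric.mem_ball] at hgx hhx
  refine ⟨g - h, ⟨hεU ?_, Γ.sub_mem hgΓ hhΓ⟩,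
    sub_ne_zero.mpr (ne_of_apply_ne (dist · x) hhx.ne')⟩
  rw [mem_ball_zero_iff, ← dist_eq_norm]
  linarith [dist_triangle_right g h x]

theorem exists_ne_zero_forall_smul_mem_topologicalClosure [NormedSpace ℝ E] {Γ : AddSubgroup E}
    (h : AccPt (0 : E) (𝓟 Γ)) : ∃ u ≠ (0 : E), ∀ t : ℝ, t • u ∈ Γ.topologicalClosure := by
  obtain ⟨δ, hδ, hlim⟩ := mem_closure_iff_seq_limit.mp
    (mem_closure_iff_nhdsWithin_neBot.mpr (accPt_principal_iff_nhdsWithin.mp h))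
  have hpos : ∀ j, 0 < ‖δ j‖ := fun j => norm_pos_iff.mpr (hδ j).2
  have hsphere : ∀ j, ‖δ j‖⁻¹ • δ j ∈ Metric.sphere (0 : E) 1 := fun j => by
    simp [norm_smul, (hpos j).ne']
  obtain ⟨u, hu, φ, hφ, hu_lim⟩ := (isCompact_sphere (0 : E) 1).tendsto_subseq hsphere
  refine ⟨u, ne_zero_of_mem_unit_sphere ⟨u, hu⟩, fun t => ?_⟩
  have hnorm : Tendsto (fun j => ‖δ (φ j)‖) atTop (𝓝[>] 0) :=
    tendsto_nhdsWithin_iff.mpr ⟨(tendsto_norm_zero.comp hlim).comp hφ.tendsto_atTop,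
      Eventually.of_forall fun j => hpos (φ j)⟩
  have hmul := ((tendsto_floor_div_mul_nhdsGT t).comp hnorm).smul hu_lim
  refine mem_closure_of_tendsto (hmul.congr fun j => ?_)
    (Eventually.of_forall fun j => Γ.zsmul_mem (hδ (φ j)).1 ⌊t / ‖δ (φ j)‖⌋)
  simp [smul_smul, (hpos (φ j)).ne', ← Int.cast_smul_eq_zsmul ℝ]

end AddSubgroup

namespace Complex

theorem linearMap_eq_re_mul_add_im_mul (f : ℂ →ₗ[ℝ] ℝ) (z : ℂ) :
    f z = z.re * f 1 + z.im * f I := by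
  conv_lhs => rw [← re_add_im z, ← mul_one (z.re : ℂ), ← real_smul, ← real_smul]
  rw [map_add, map_smul, map_smul, smul_eq_mul, smul_eq_mul]

theorem dense_addSubgroup_of_accPt_zero {Γ : AddSubgroup ℂ} (h0 : AccPt (0 : ℂ) (𝓟 Γ))
    (himage : ∀ f : ℂ →ₗ[ℝ] ℝ, f ≠ 0 → Dense (f '' Γ)) : Dense (Γ : Set ℂ) := by
  obtain ⟨u, hu, hline⟩ := Γ.exists_ne_zero_forall_smul_mem_topologicalClosure h0
  set f : ℂ →ₗ[ℝ] ℝ := imLm ∘ₗ LinearMap.mulLeft ℝ u⁻¹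
  have hf : f ≠ 0 := fun hf => by simpa [f, hu] using LinearMap.congr_fun hf (u * I)
  refine Γ.dense_of_ker_le_topologicalClosure hf (fun x hx => ?_) (himage f hf)
  have hreal : u⁻¹ * x = ((u⁻¹ * x).re : ℂ) := Complex.ext rfl (by simpa [f] using hx)
  convert hline (u⁻¹ * x).re using 1
  rw [real_smul, ← hreal, mul_comm, mul_inv_cancel_left₀ hu]

end Complex

/-- The logarithms of the points `z ^ m * w ^ n`. -/
def logSubgroup (R r a b : ℝ) : AddSubgroup ℂ :=
  AddSubgroup.closure {Real.log R + a * I, Real.log r + b * I, 2 * π * I}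

section logSubgroup

variable {R r a b : ℝ}

theorem dense_image_logSubgroup
    (hli : LinearIndependent ℚ ![π * Real.log R, π * Real.log r, a * Real.log r - b * Real.log R])
    {f : ℂ →ₗ[ℝ] ℝ} (hf : f ≠ 0) : Dense (f '' logSubgroup R r a b) := by
  have hL : Real.log R ≠ 0 := fun h => by simpa [h] using hli.ne_zero 0
  rw [← LinearMap.toAddMonoidHom_coe, ← AddSubgroup.coe_map]
  refine (AddSubgroup.dense_or_cyclic _).resolve_right fun ⟨c, hc⟩ => hf ?_
  have hmem : ∀ x ∈ ({Real.log R + a * I, Real.log r + b * I, 2 * π * I} : Set ℂ),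
      x.re * f 1 + x.im * f I ∈ AddSubgroup.zmultiples c := fun x hx => by
    rw [← linearMap_eq_re_mul_add_im_mul, AddSubgroup.zmultiples_eq_closure, ← hc]
    exact AddSubgroup.mem_map_of_mem _ (AddSubgroup.subset_closure hx)
  obtain ⟨h1, h2, h3⟩ : Real.log R * f 1 + a * f I ∈ AddSubgroup.zmultiples c ∧
      Real.log r * f 1 + b * f I ∈ AddSubgroup.zmultiples c ∧
      2 * π * f I ∈ AddSubgroup.zmultiples c := by
    simpa using hmem
  set p : Fin 3 → ℝ :=
    ![-2 * (Real.log r * f 1 + b * f I), 2 * (Real.log R * f 1 + a * f I), -(2 * π * f I)]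
  have hp : ∀ i, p i ∈ AddSubgroup.zmultiples c := by
    intro i
    fin_cases i
    · convert (AddSubgroup.zmultiples c).zsmul_mem h2 (-2) using 1
      simp [p, zsmul_eq_mul, mul_add]
    · convert (AddSubgroup.zmultiples c).zsmul_mem h1 2 using 1
      simp [p, zsmul_eq_mul, mul_add]
    · simpa [p] using neg_mem h3
  have hrel :
      ∑ i, p i * ![π * Real.log R, π * Real.log r, a * Real.log r - b * Real.log R] i = 0 := by
    simp [p, Fin.sum_univ_three]
    ring
  have hp0 := hli.eq_zero_of_forall_mem_zmultiples hp hrel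
  have hI : f I = 0 := by simpa [p, Real.pi_ne_zero] using congr_fun hp0 2
  have h1 : f 1 = 0 := by simpa [p, hI, hL] using congr_fun hp0 1
  exact basisOneI.ext fun i => by fin_cases i <;> simp [h1, hI]

theorem accPt_zero_logSubgroup
    (hli : LinearIndependent ℚ ![π * Real.log R, π * Real.log r, a * Real.log r - b * Real.log R]) :
    AccPt (0 : ℂ) (𝓟 (logSubgroup R r a b)) := by
  set Γ := logSubgroup R r a b
  have h2πI : 2 * π * I ∈ Γ := AddSubgroup.subset_closure (by simp)
  have hre : Dense (re '' Γ) := by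
    simpa using dense_image_logSubgroup hli (f := reLm) fun h => by
      simpa using LinearMap.congr_fun h 1
  refine Γ.accPt_zero_of_infinite_inter
    ((Metric.isBounded_Icc (0 : ℝ) 1).reProdIm (Metric.isBounded_Icc 0 (2 * π))) ?_
  refine Infinite.of_image re
    ((hre.infinite_inter_of_isOpen isOpen_Ioo (Ioo_infinite zero_lt_one)).mono ?_)
  rintro _ ⟨hg01, g, hg, rfl⟩
  have h2π : (0 : ℝ) < 2 * π := by positivity
  refine ⟨g - ⌊g.im / (2 * π)⌋ • (2 * π * I),
    ⟨⟨?_, ?_⟩, Γ.sub_mem hg (Γ.zsmul_mem h2πI _)⟩, by simp⟩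
  · simpa using Ioo_subset_Icc_self hg01
  · have him : (g - ⌊g.im / (2 * π)⌋ • (2 * π * I)).im
        = g.im - ⌊g.im / (2 * π)⌋ * (2 * π) := by
      simp [zsmul_eq_mul]
    rw [mem_preimage, him]
    exact ⟨Int.sub_floor_div_mul_nonneg _ h2π, (Int.sub_floor_div_mul_lt _ h2π).le⟩

theorem exp_mem_of_mem_logSubgroup (hR : 0 < R) (hr : 0 < r) {x : ℂ}
    (hx : x ∈ logSubgroup R r a b) :
    ∃ m n : ℤ, exp x = (R * exp (a * I)) ^ m * (r * exp (b * I)) ^ n := by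
  have hz : (R * exp (a * I) : ℂ) ≠ 0 := mul_ne_zero (ofReal_ne_zero.mpr hR.ne') (exp_ne_zero _)
  have hw : (r * exp (b * I) : ℂ) ≠ 0 := mul_ne_zero (ofReal_ne_zero.mpr hr.ne') (exp_ne_zero _)
  induction hx using AddSubgroup.closure_induction with
  | mem x hx =>
    rcases hx with rfl | rfl | rfl
    · exact ⟨1, 0, by simp [exp_add, ← ofReal_exp, Real.exp_log hR]⟩
    · exact ⟨0, 1, by simp [exp_add, ← ofReal_exp, Real.exp_log hr]⟩
    · exact ⟨0, 0, by simp⟩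
  | zero => exact ⟨0, 0, by simp⟩
  | add x y _ _ hx hy =>
    obtain ⟨m, n, hxmn⟩ := hx
    obtain ⟨m', n', hymn⟩ := hy
    refine ⟨m + m', n + n', ?_⟩
    rw [exp_add, hxmn, hymn, zpow_add₀ hz, zpow_add₀ hw]
    ring
  | neg x _ hx =>
    obtain ⟨m, n, hxmn⟩ := hx
    exact ⟨-m, -n, by rw [exp_neg, hxmn, zpow_neg, zpow_neg, mul_inv]⟩

end logSubgroup

/-- If `π·log R`, `π·log r`, `a·log r − b·log R` are linearly independent
over `ℚ`, then with `z = R·e^{ia}`, `w = r·e^{ib}` the set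
`X = { z^m · w^n : m, n ∈ ℤ }` is dense in `ℂ`. -/
theorem dense_zpow_mul_zpow
    (R r a b : ℝ) (hR : 0 < R) (hr : 0 < r)
    (hli : LinearIndependent ℚ
      ![Real.pi * Real.log R, Real.pi * Real.log r,
        a * Real.log r - b * Real.log R]) :
    Dense {u : ℂ | ∃ m n : ℤ,
      u = ((R : ℂ) * Complex.exp (a * Complex.I)) ^ m *
          ((r : ℂ) * Complex.exp (b * Complex.I)) ^ n} := by
  have hΓ : Dense (logSubgroup R r a b : Set ℂ) :=
    dense_addSubgroup_of_accPt_zero (accPt_zero_logSubgroup hli)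
      fun _ hf => dense_image_logSubgroup hli hf
  have hexp : DenseRange exp := by
    rw [DenseRange, range_exp]
    exact dense_compl_singleton 0
  refine (hexp.dense_image continuous_exp hΓ).mono ?_
  rintro _ ⟨x, hx, rfl⟩
  exact exp_mem_of_mem_logSubgroup hR hr hx
end

section
/- Let R, r be positive real numbers and a, b real numbers such that the three real numbers π·log R, π·log r, and a·log r − b·log R are linearly independent over ℚ. Then the set X' = { (m·log R − n·log r, m·a − n·b + 2k·π) : m, n, k ∈ ℤ } is dense in ℝ². -/
/-!
The subgroup `Γ` of `ℝ²` generated by `(log R, a)`, `(log r, b)`, `(0, 2π)` has rank 3, so it is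
not discrete, and a limit of the directions of its short vectors spans a line `ℝ d` contained in
its closure. Let `φ` be a linear form with kernel `ℝ d`. If `φ(Γ)` is dense in `ℝ`, then so is
`Γ + ℝ d` in `ℝ²`, hence `Γ` is dense. Otherwise `φ(Γ)` is cyclic, say `φ(Γ) ⊆ cℤ`, and eliminating
`φ` and `c` from the three resulting relations yields an integer relation between `2π log R`,
`2π log r` and `a log r - b log R`.
-/

open Filter Topology Set

theorem smul_mem_closure_of_tendsto_smul_mem {E : Type*} [AddCommGroup E] [TopologicalSpace E]
    [Module ℝ E] [ContinuousSMul ℝ E] (Γ : AddSubgroup E) {r : ℕ → ℝ} {u : ℕ → E} {d : E}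
    (hr_pos : ∀ n, 0 < r n) (hr : Tendsto r atTop (𝓝 0)) (hu : Tendsto u atTop (𝓝 d))
    (hmem : ∀ n, r n • u n ∈ Γ) (t : ℝ) : t • d ∈ closure (Γ : Set E) := by
  have hk : Tendsto (fun n ↦ (⌊t / r n⌋ : ℝ) * r n) atTop (𝓝 t) := by
    refine tendsto_of_tendsto_of_tendsto_of_le_of_le (by simpa using tendsto_const_nhds.sub hr)
      tendsto_const_nhds (fun n ↦ ?_) (fun n ↦ (le_div_iff₀ (hr_pos n)).1 (Int.floor_le _))
    have := (div_lt_iff₀ (hr_pos n)).1 (Int.lt_floor_add_one (t / r n))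
    linarith
  refine mem_closure_of_tendsto (hk.smul hu) (.of_forall fun n ↦ (?_ : _ ∈ (Γ : Set E)))
  rw [SetLike.mem_coe, mul_smul, Int.cast_smul_eq_zsmul]
  exact Γ.zsmul_mem (hmem n) _

theorem exists_ne_zero_forall_smul_mem_closure {E : Type*} [NormedAddCommGroup E]
    [NormedSpace ℝ E] [ProperSpace E] (Γ : AddSubgroup E) (hΓ : ¬ DiscreteTopology Γ) :
    ∃ d ≠ (0 : E), ∀ t : ℝ, t • d ∈ closure (Γ : Set E) := by
  have hsmall (n : ℕ) : ∃ γ ∈ Γ, γ ≠ 0 ∧ ‖γ‖ < 1 / (n + 1) := by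
    by_contra! h
    refine hΓ (discreteTopology_iff_isOpen_singleton_zero.2 <| Metric.isOpen_singleton_iff.2
      ⟨1 / (n + 1), by positivity, fun γ hγ ↦ ?_⟩)
    by_contra hne
    exact (h γ γ.2 (by simpa using hne)).not_gt (by simpa using hγ)
  choose γ hγΓ hγ0 hγ_lt using hsmall
  have hdir (n : ℕ) : ‖γ n‖⁻¹ • γ n ∈ Metric.sphere (0 : E) 1 := by
    simp [norm_smul, hγ0]
  obtain ⟨d, hd, φ, hφ, hlim⟩ := (isCompact_sphere (0 : E) 1).tendsto_subseq hdir
  refine ⟨d, ne_zero_of_mem_unit_sphere ⟨d, hd⟩, smul_mem_closure_of_tendsto_smul_mem Γ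
    (fun n ↦ norm_pos_iff.2 (hγ0 (φ n))) ?_ hlim fun n ↦ ?_⟩
  · exact squeeze_zero (fun n ↦ norm_nonneg _) (fun n ↦ (hγ_lt (φ n)).le)
      (tendsto_one_div_add_atTop_nhds_zero_nat.comp hφ.tendsto_atTop)
  · rw [Function.comp_apply, smul_inv_smul₀ (norm_ne_zero_iff.2 (hγ0 (φ n)))]
    exact hγΓ (φ n)

theorem not_discreteTopology_span_int {E ι : Type*} [NormedAddCommGroup E] [NormedSpace ℝ E]
    [FiniteDimensional ℝ E] [Fintype ι] {v : ι → E} (hv : LinearIndependent ℤ v)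
    (hcard : Module.finrank ℝ E < Fintype.card ι) :
    ¬ DiscreteTopology (Submodule.span ℤ (range v)) := by
  intro h
  have hrank := Real.finrank_eq_int_finrank_of_discrete h
  rw [Set.finrank, Set.finrank, finrank_span_eq_card hv] at hrank
  have := Submodule.finrank_le (Submodule.span ℝ (range v))
  omega

theorem dense_of_ker_subset_closure {E : Type*} [AddCommGroup E] [TopologicalSpace E]
    [IsTopologicalAddGroup E] [Module ℝ E] [ContinuousSMul ℝ E] (Γ : AddSubgroup E)
    (φ : E →ₗ[ℝ] ℝ) (hker : ∀ x, φ x = 0 → x ∈ closure (Γ : Set E)) (hφ : Dense (φ '' Γ)) :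
    Dense (Γ : Set E) := by
  have hC : ∀ x, x ∈ Γ.topologicalClosure ↔ x ∈ closure (Γ : Set E) := fun x ↦ by
    rw [← AddSubgroup.topologicalClosure_coe, SetLike.mem_coe]
  obtain ⟨_, ⟨γ, -, rfl⟩, hγ⟩ := hφ.exists_mem_open isOpen_compl_singleton ⟨1, one_ne_zero⟩
  set e := (φ γ)⁻¹ • γ
  have he : φ e = 1 := by simpa [e] using inv_mul_cancel₀ hγ
  have hsplit (x : E) : x - φ x • e ∈ Γ.topologicalClosure := (hC _).2 (hker _ (by simp [he]))
  have hline : ∀ t : ℝ, t • e ∈ Γ.topologicalClosure := by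
    suffices univ ⊆ {t : ℝ | t • e ∈ closure (Γ : Set E)} from fun t ↦ (hC _).2 (this trivial)
    rw [← hφ.closure_eq]
    refine closure_minimal ?_ (isClosed_closure.preimage (continuous_id.smul continuous_const))
    rintro _ ⟨x, hx, rfl⟩
    rw [mem_ofPred_eq, ← hC, ← sub_sub_cancel x (φ x • e)]
    exact sub_mem (Γ.le_topologicalClosure hx) (hsplit x)
  intro x
  rw [← hC, ← sub_add_cancel x (φ x • e)]
  exact add_mem (hsplit x) (hline _)

theorem exists_smul_eq_of_mul_sub_mul_eq_zero {d p : ℝ × ℝ} (hd : d ≠ 0)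
    (h : d.1 * p.2 - d.2 * p.1 = 0) : ∃ t : ℝ, t • d = p := by
  rcases eq_or_ne d.1 0 with h1 | h1
  · have h2 : d.2 ≠ 0 := fun h2 ↦ hd (Prod.ext h1 h2)
    have hp1 : p.1 = 0 := by simpa [h1, h2] using h
    exact ⟨p.2 / d.2, Prod.ext (by simp [h1, hp1]) (by simp [h2])⟩
  · refine ⟨p.1 / d.1, Prod.ext (by simp [h1]) ?_⟩
    simp only [Prod.smul_snd, smul_eq_mul]
    field_simp
    linarith

theorem dense_span_int_prod {ι : Type*} [Fintype ι] {v : ι → ℝ × ℝ}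
    (hv : LinearIndependent ℤ v) (hcard : 2 < Fintype.card ι)
    (hv_gen : ∀ α β c : ℝ, (α, β) ≠ 0 →
      ∃ i, α * (v i).1 + β * (v i).2 ∉ AddSubgroup.zmultiples c) :
    Dense (Submodule.span ℤ (range v) : Set (ℝ × ℝ)) := by
  set Γ := (Submodule.span ℤ (range v)).toAddSubgroup
  obtain ⟨d, hd, hline⟩ := exists_ne_zero_forall_smul_mem_closure Γ
    (not_discreteTopology_span_int hv (by simpa using hcard))
  set φ : ℝ × ℝ →ₗ[ℝ] ℝ := d.1 • LinearMap.snd ℝ ℝ ℝ - d.2 • LinearMap.fst ℝ ℝ ℝ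
  have hφ (p : ℝ × ℝ) : φ p = -d.2 * p.1 + d.1 * p.2 := by
    simp only [φ, LinearMap.sub_apply, LinearMap.smul_apply, LinearMap.snd_apply,
      LinearMap.fst_apply, smul_eq_mul]
    ring
  refine dense_of_ker_subset_closure Γ φ (fun p hp ↦ ?_) ?_
  · obtain ⟨t, rfl⟩ := exists_smul_eq_of_mul_sub_mul_eq_zero hd (by rw [hφ] at hp; linarith)
    exact hline t
  rcases (Γ.map φ.toAddMonoidHom).dense_or_cyclic with hdense | ⟨c, hc⟩
  · simpa using hdense
  obtain ⟨i, hi⟩ := hv_gen (-d.2) d.1 c (fun h ↦ hd (by simpa [Prod.ext_iff, and_comm] using h))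
  refine (hi ?_).elim
  rw [← hφ, AddSubgroup.zmultiples_eq_closure, ← hc]
  exact AddSubgroup.mem_map_of_mem _ (Submodule.subset_span (mem_range_self i))

theorem LinearIndependent.eq_zero_of_smul_add_smul_add_smul {R M : Type*} [Ring R]
    [AddCommGroup M] [Module R M] {x y z : M} (h : LinearIndependent R ![x, y, z]) {p q s : R}
    (hpqs : p • x + q • y + s • z = 0) : p = 0 ∧ q = 0 ∧ s = 0 := by
  have := Fintype.linearIndependent_iff.1 h ![p, q, s] (by simpa [Fin.sum_univ_three] using hpqs)
  exact ⟨this 0, this 1, this 2⟩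

theorem linearIndependent_int_logArg {L₁ L₂ A B τ : ℝ}
    (h : LinearIndependent ℤ ![τ * L₁, τ * L₂, A * L₂ - B * L₁]) :
    LinearIndependent ℤ ![(L₁, A), (L₂, B), (0, τ)] := by
  have hτ : τ ≠ 0 := left_ne_zero_of_mul (h.ne_zero 0)
  rw [Fintype.linearIndependent_iff]
  intro g hg
  simp only [Fin.sum_univ_three, Prod.ext_iff] at hg
  simp only [Matrix.cons_val_zero, Matrix.cons_val_one, Matrix.cons_val, Prod.smul_mk, zsmul_eq_mul,
    Prod.mk_add_mk, smul_zero, add_zero, Prod.fst_zero, Prod.snd_zero] at hg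
  obtain ⟨h0, h1, -⟩ := h.eq_zero_of_smul_add_smul_add_smul (p := g 0) (q := g 1) (s := 0)
    (by simp only [zsmul_eq_mul, zero_smul, add_zero]; linear_combination τ * hg.1)
  have h2 : g 2 = 0 := by simpa [h0, h1, hτ] using hg.2
  intro i
  fin_cases i <;> assumption

theorem exists_notMem_zmultiples_logArg {L₁ L₂ A B τ : ℝ}
    (h : LinearIndependent ℤ ![τ * L₁, τ * L₂, A * L₂ - B * L₁]) (α β c : ℝ) (hαβ : (α, β) ≠ 0) :
    ∃ i, α * (![(L₁, A), (L₂, B), (0, τ)] i).1 + β * (![(L₁, A), (L₂, B), (0, τ)] i).2 ∉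
      AddSubgroup.zmultiples c := by
  by_contra! hall
  obtain ⟨n₁, e₁⟩ := AddSubgroup.mem_zmultiples_iff.1 (hall 0)
  obtain ⟨n₂, e₂⟩ := AddSubgroup.mem_zmultiples_iff.1 (hall 1)
  obtain ⟨n₃, e₃⟩ := AddSubgroup.mem_zmultiples_iff.1 (hall 2)
  simp only [zsmul_eq_mul, Matrix.cons_val_zero, Matrix.cons_val_one] at e₁ e₂
  simp only [zsmul_eq_mul, Matrix.cons_val, mul_zero, zero_add] at e₃
  have hτ : τ ≠ 0 := left_ne_zero_of_mul (h.ne_zero 0)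
  have hL₁ : L₁ ≠ 0 := right_ne_zero_of_mul (h.ne_zero 0)
  rcases eq_or_ne β 0 with rfl | hβ
  · have hα : α ≠ 0 := fun hα ↦ hαβ (by simp [hα])
    obtain ⟨-, hn₁, -⟩ := h.eq_zero_of_smul_add_smul_add_smul (p := n₂) (q := -n₁) (s := 0) <| by
      refine mul_left_cancel₀ hα ?_
      push_cast [zsmul_eq_mul]
      linear_combination τ * (n₁ * e₂ - n₂ * e₁)
    simp [neg_eq_zero.1 hn₁, hα, hL₁] at e₁
  · obtain ⟨-, -, rfl⟩ := h.eq_zero_of_smul_add_smul_add_smul (p := n₂) (q := -n₁) (s := n₃) <| by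
      refine mul_left_cancel₀ hβ ?_
      push_cast [zsmul_eq_mul]
      linear_combination (-n₂ * L₁ + n₁ * L₂) * e₃ - n₃ * L₂ * e₁ + n₃ * L₁ * e₂
    simp [hβ, hτ] at e₃

theorem dense_logArg_lattice_of_linearIndependent {L₁ L₂ A B τ : ℝ}
    (h : LinearIndependent ℤ ![τ * L₁, τ * L₂, A * L₂ - B * L₁]) :
    Dense {p : ℝ × ℝ | ∃ m n k : ℤ,
      p = ((m : ℝ) * L₁ - (n : ℝ) * L₂, (m : ℝ) * A - (n : ℝ) * B + (k : ℝ) * τ)} := by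
  convert dense_span_int_prod (linearIndependent_int_logArg h) (by simp)
    (exists_notMem_zmultiples_logArg h) using 1
  ext p
  simp only [mem_ofPred_eq, SetLike.mem_coe, Submodule.mem_span_range_iff_exists_fun,
    Fin.sum_univ_three]
  constructor
  · rintro ⟨m, n, k, rfl⟩
    exact ⟨![m, -n, k], by ext <;> simp [sub_eq_add_neg]⟩
  · rintro ⟨g, rfl⟩
    exact ⟨g 0, -g 1, g 2, by ext <;> simp⟩

theorem dense_log_arg_lattice_general
    (R r a b : ℝ)
    (hli : LinearIndependent ℚ
      ![Real.pi * Real.log R, Real.pi * Real.log r,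
        a * Real.log r - b * Real.log R]) :
    Dense {p : ℝ × ℝ | ∃ m n k : ℤ,
      p = ((m : ℝ) * Real.log R - (n : ℝ) * Real.log r,
           (m : ℝ) * a - (n : ℝ) * b + 2 * (k : ℝ) * Real.pi)} := by
  have h2 : (2 : ℚ) ≠ 0 := two_ne_zero
  have hint : LinearIndependent ℤ ![2 * Real.pi * Real.log R, 2 * Real.pi * Real.log r,
      a * Real.log r - b * Real.log R] := by
    convert (hli.units_smul ![Units.mk0 2 h2, Units.mk0 2 h2, 1]).restrict_scalars' ℤ using 1
    ext i
    fin_cases i <;> simp [Units.smul_def, Rat.smul_def, mul_assoc]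
  simpa only [mul_assoc, mul_comm (2 : ℝ)] using dense_logArg_lattice_of_linearIndependent hint

/-- If `π·log R`, `π·log r`, `a·log r − b·log R` are linearly independent
over `ℚ`, then `X' = { (m·log R − n·log r, m·a − n·b + 2k·π) : m, n, k ∈ ℤ }` is dense
in `ℝ²`. -/
theorem dense_log_arg_lattice
    (R r a b : ℝ) (hR : 0 < R) (hr : 0 < r)
    (hli : LinearIndependent ℚ
      ![Real.pi * Real.log R, Real.pi * Real.log r,
        a * Real.log r - b * Real.log R]) :
    Dense {p : ℝ × ℝ | ∃ m n k : ℤ,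
      p = ((m : ℝ) * Real.log R - (n : ℝ) * Real.log r,
           (m : ℝ) * a - (n : ℝ) * b + 2 * (k : ℝ) * Real.pi)} :=
  dense_log_arg_lattice_general R r a b hli
end

section
/- Let R, r be positive real numbers and a, b real numbers such that the three real numbers π·log R, π·log r, and a·log r − b·log R are linearly independent over ℚ, and set z = R·e^{ia}, w = r·e^{ib}. Then for every v ∈ ℂ and every δ > 0 there exists a natural number M > 0 such that: whenever m, n ∈ ℤ satisfy |z^m·w^n − v| < δ, there exist integers m', n' with m < m' ≤ m + M and |z^{m'}·w^{n'} − v| < δ. -/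
/-!
Write `z = exp l₁`, `w = exp l₂` with `l₁ = log R + a i`, `l₂ = log r + b i`; the products
`z ^ p * w ^ q` are the exponentials of the additive group `Γ = ℤ l₁ + ℤ l₂ + 2πi ℤ ⊆ ℂ ≅ ℝ²`.
Three `ℤ`-independent vectors of `ℝ²` cannot span a discrete group, so `Γ` has arbitrarily small
nonzero elements `γ`. The independence hypothesis says exactly that no nonzero real functional
maps `Γ` into a cyclic group, so `Γ` projects densely onto the direction orthogonal to `γ`; hence
`Γ` is dense, and so is `{z ^ p * w ^ q : p ≥ 1}` in `ℂˣ`.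
For the return time, fix finitely many such products `u ≈ 1 + s ω` with `ω ∈ {±1, ±i}`. For every
point `x` of the disc `B(v, δ)`, one of them moves `x * u` towards the centre, or at least keeps it
inside the disc; `M` bounds the exponents of `z` in these finitely many products.
-/

open Complex Module Submodule
open scoped ComplexConjugate Real RealInnerProductSpace

theorem LinearIndependent.eq_zero_of_three {R M : Type*} [Ring R] [AddCommGroup M] [Module R M]
    {x y z : M} (h : LinearIndependent R ![x, y, z]) {p q k : R}
    (hpqk : p • x + q • y + k • z = 0) :
    p = 0 ∧ q = 0 ∧ k = 0 := by
  have := Fintype.linearIndependent_iff.1 h ![p, q, k] (by simpa [Fin.sum_univ_three] using hpqk)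
  exact ⟨this 0, this 1, this 2⟩

theorem exists_mem_span_int_ne_zero_norm_lt {E ι : Type*} [NormedAddCommGroup E]
    [NormedSpace ℝ E] [FiniteDimensional ℝ E] [Fintype ι] {v : ι → E}
    (hv : LinearIndependent ℤ v) (hcard : finrank ℝ E < Fintype.card ι) {ε : ℝ} (hε : 0 < ε) :
    ∃ x ∈ span ℤ (Set.range v), x ≠ 0 ∧ ‖x‖ < ε := by
  have hnd : ¬ DiscreteTopology (span ℤ (Set.range v)) := fun hdisc ↦ by
    have hrank := Real.finrank_eq_int_finrank_of_discrete hdisc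
    rw [Set.finrank, Set.finrank, finrank_span_eq_card hv] at hrank
    exact hcard.not_ge (hrank ▸ Submodule.finrank_le _)
  rw [discreteTopology_iff_isOpen_singleton_zero, Metric.isOpen_singleton_iff] at hnd
  push Not at hnd
  obtain ⟨⟨x, hx⟩, hxε, hx0⟩ := hnd ε hε
  exact ⟨x, hx, fun h ↦ hx0 (Subtype.ext h), by simpa using hxε⟩

theorem AddSubgroup.dense_of_exists_norm_lt_of_dense_im_conj_mul (Γ : AddSubgroup ℂ)
    (hsmall : ∀ ε > 0, ∃ γ ∈ Γ, γ ≠ 0 ∧ ‖γ‖ < ε)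
    (hproj : ∀ g : ℂ, g ≠ 0 → Dense ((fun x : ℂ ↦ (conj g * x).im) '' Γ)) : Dense (Γ : Set ℂ) := by
  refine Metric.dense_iff.2 fun ξ ε hε ↦ ?_
  obtain ⟨γ, hγΓ, hγ0, hγε⟩ := hsmall (ε / 2) (half_pos hε)
  have hγpos : 0 < ‖γ‖ := norm_pos_iff.2 hγ0
  obtain ⟨_, ⟨η, hηΓ, rfl⟩, hη⟩ :=
    (hproj γ hγ0).exists_dist_lt ((conj γ * ξ).im) (mul_pos (half_pos hε) hγpos)
  set x := ξ - η
  set c := (conj γ * x).re / normSq γ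
  -- `x - c • γ` is the component of `x` orthogonal to `γ`
  have horth : ‖γ‖ * ‖x - c • γ‖ = |(conj γ * x).im| := by
    have hcγ : conj γ * (c • γ) = (conj γ * x).re := by
      rw [real_smul, mul_left_comm, ← normSq_eq_conj_mul_self, ← ofReal_mul,
        div_mul_cancel₀ _ (normSq_pos.2 hγ0).ne']
    have : conj γ * (x - c • γ) = (conj γ * x).im * I := by
      rw [mul_sub, hcγ]
      linear_combination -re_add_im (conj γ * x)
    rw [← norm_conj γ, ← norm_mul, this, norm_mul, norm_I, mul_one, norm_real, Real.norm_eq_abs]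
  have hxc : ‖x - c • γ‖ < ε / 2 := by
    have : |(conj γ * x).im| < ε / 2 * ‖γ‖ := by
      simpa [x, mul_sub, Real.dist_eq, abs_sub_comm] using hη
    nlinarith
  refine ⟨η + ⌊c⌋ • γ, ?_, add_mem hηΓ (zsmul_mem hγΓ _)⟩
  rw [Metric.mem_ball, dist_comm, dist_eq_norm]
  have hsplit : ξ - (η + ⌊c⌋ • γ) = (x - c • γ) + Int.fract c • γ := by
    rw [Int.fract, sub_smul, ← Int.cast_smul_eq_zsmul ℝ]
    simp only [x]
    abel
  calc ‖ξ - (η + ⌊c⌋ • γ)‖ ≤ ‖x - c • γ‖ + Int.fract c * ‖γ‖ := by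
        rw [hsplit]
        exact (norm_add_le _ _).trans_eq
          (by rw [norm_smul, Real.norm_of_nonneg (Int.fract_nonneg c)])
    _ < ε / 2 + 1 * (ε / 2) := by
        gcongr
        exact Int.fract_lt_one c
    _ = ε := by ring

def logGroup (l₁ l₂ : ℂ) : Submodule ℤ ℂ := span ℤ (Set.range ![l₁, l₂, 2 * π * I])

variable {l₁ l₂ : ℂ}

theorem mem_logGroup {x : ℂ} :
    x ∈ logGroup l₁ l₂ ↔ ∃ p q k : ℤ, p * l₁ + q * l₂ + k * (2 * π * I) = x := by
  rw [logGroup, mem_span_range_iff_exists_fun]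
  simp [Fin.sum_univ_three, Fin.exists_fin_succ_pi, zsmul_eq_mul]

section Independent

variable (hli : LinearIndependent ℤ ![π * l₁.re, π * l₂.re, (conj l₂ * l₁).im])
include hli

theorem linearIndependent_logGroup_generators : LinearIndependent ℤ ![l₁, l₂, 2 * π * I] := by
  refine Fintype.linearIndependent_iff.2 fun c hc ↦ ?_
  simp only [Fin.sum_univ_three, Fin.isValue, Matrix.cons_val, zsmul_eq_mul] at hc
  have hre : (c 0 : ℝ) * l₁.re + c 1 * l₂.re = 0 := by simpa using congrArg re hc
  obtain ⟨h₀, h₁, -⟩ := hli.eq_zero_of_three (p := c 0) (q := c 1) (k := 0) (by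
    simp only [zsmul_eq_mul]; push_cast; linear_combination π * hre)
  have h₂ : c 2 = 0 := by
    have him := congrArg im hc
    rw [h₀, h₁] at him
    simpa [Real.pi_ne_zero] using him
  intro i
  fin_cases i <;> assumption

theorem exists_pos_coeff_norm_lt {ε : ℝ} (hε : 0 < ε) :
    ∃ p q k : ℤ, 0 < p ∧ ‖p * l₁ + q * l₂ + k * (2 * π * I)‖ < ε := by
  have hl₂ : l₂.re ≠ 0 := right_ne_zero_of_mul (hli.ne_zero 1)
  obtain ⟨x, hx, hx0, hxε⟩ := exists_mem_span_int_ne_zero_norm_lt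
    (linearIndependent_logGroup_generators hli) (by simp)
    (lt_min hε (lt_min (abs_pos.2 hl₂) Real.two_pi_pos))
  obtain ⟨p, q, k, rfl⟩ := mem_logGroup.1 hx
  simp only [lt_min_iff] at hxε
  -- nonzero elements of `ℤ l₂ + 2πi ℤ` have norm at least `min |l₂.re| 2π`
  have hp : p ≠ 0 := by
    rintro rfl
    have hq : q = 0 := by
      by_contra hq
      have : |(q : ℝ)| * |l₂.re| < |l₂.re| := by
        simpa [abs_mul] using (abs_re_le_norm _).trans_lt hxε.2.1
      have hq1 : (1 : ℝ) ≤ |(q : ℝ)| := by exact_mod_cast Int.one_le_abs hq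
      nlinarith [abs_pos.2 hl₂]
    subst hq
    have hk : k = 0 := by
      have : |(k : ℝ)| * (2 * π) < 2 * π := by simpa [abs_of_pos Real.pi_pos] using hxε.2.2
      have hk1 : |(k : ℝ)| < 1 := by nlinarith [Real.pi_pos]
      exact Int.abs_lt_one_iff.1 (by exact_mod_cast hk1)
    simp [hk] at hx0
  rcases hp.lt_or_gt with hneg | hpos
  · refine ⟨-p, -q, -k, neg_pos.2 hneg, ?_⟩
    have e : ((-p : ℤ) : ℂ) * l₁ + ((-q : ℤ) : ℂ) * l₂ + ((-k : ℤ) : ℂ) * (2 * π * I) =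
        -(p * l₁ + q * l₂ + k * (2 * π * I)) := by push_cast; ring
    rw [e, norm_neg]
    exact hxε.1
  · exact ⟨p, q, k, hpos, hxε.1⟩

theorem eq_zero_of_im_conj_mul_mem_zmultiples {g : ℂ} {c : ℝ}
    (h₁ : (conj g * l₁).im ∈ AddSubgroup.zmultiples c)
    (h₂ : (conj g * l₂).im ∈ AddSubgroup.zmultiples c)
    (h₃ : (conj g * (2 * π * I)).im ∈ AddSubgroup.zmultiples c) : g = 0 := by
  obtain ⟨n₁, e₁⟩ := AddSubgroup.mem_zmultiples_iff.1 h₁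
  obtain ⟨n₂, e₂⟩ := AddSubgroup.mem_zmultiples_iff.1 h₂
  obtain ⟨n₃, e₃⟩ := AddSubgroup.mem_zmultiples_iff.1 h₃
  simp only [zsmul_eq_mul, mul_im, conj_re, conj_im] at e₁ e₂
  replace e₃ : (n₃ : ℝ) * c = g.re * (2 * π) := by simpa using e₃
  -- eliminating `g` from the three equations leaves an integer relation, multiplied by `c`
  have hrel : c * ((2 * n₂) • (π * l₁.re) + (-(2 * n₁)) • (π * l₂.re) +
      n₃ • (conj l₂ * l₁).im) = 0 := by
    simp only [zsmul_eq_mul, mul_im, conj_re, conj_im]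
    push_cast
    linear_combination (2 * π * l₁.re) * e₂ - (2 * π * l₂.re) * e₁ +
      (l₂.re * l₁.im - l₂.im * l₁.re) * e₃
  have hzero : n₁ * c = 0 ∧ n₂ * c = 0 ∧ n₃ * c = 0 := by
    rcases mul_eq_zero.1 hrel with hc | hrel
    · simp [hc]
    · obtain ⟨hn₂, hn₁, rfl⟩ := hli.eq_zero_of_three hrel
      obtain rfl : n₁ = 0 := by omega
      obtain rfl : n₂ = 0 := by omega
      simp
  have hre : g.re = 0 :=
    (mul_eq_zero.1 (e₃ ▸ hzero.2.2)).resolve_right (by positivity)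
  have hl₁ : l₁.re ≠ 0 := right_ne_zero_of_mul (hli.ne_zero 0)
  have him : g.im = 0 := by
    rw [hzero.1, hre] at e₁
    simpa [hl₁] using e₁
  exact Complex.ext hre him

theorem dense_im_conj_mul_image_logGroup {g : ℂ} (hg : g ≠ 0) :
    Dense ((fun x : ℂ ↦ (conj g * x).im) '' logGroup l₁ l₂) := by
  let f : ℂ →+ ℝ := imAddGroupHom.comp (AddMonoidHom.mulLeft (conj g))
  rcases AddSubgroup.dense_or_cyclic ((logGroup l₁ l₂).toAddSubgroup.map f) with hd | ⟨c, hc⟩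
  · exact hd
  · rw [← AddSubgroup.zmultiples_eq_closure] at hc
    have hmem : ∀ x ∈ logGroup l₁ l₂, (conj g * x).im ∈ AddSubgroup.zmultiples c :=
      fun x hx ↦ hc ▸ AddSubgroup.mem_map_of_mem f hx
    exact absurd (eq_zero_of_im_conj_mul_mem_zmultiples hli
      (hmem _ (subset_span ⟨0, rfl⟩)) (hmem _ (subset_span ⟨1, rfl⟩))
      (hmem _ (subset_span ⟨2, rfl⟩))) hg

theorem dense_logGroup : Dense (logGroup l₁ l₂ : Set ℂ) :=
  (logGroup l₁ l₂).toAddSubgroup.dense_of_exists_norm_lt_of_dense_im_conj_mul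
    (fun _ hε ↦ exists_mem_span_int_ne_zero_norm_lt
      (linearIndependent_logGroup_generators hli) (by simp) hε)
    (fun g hg ↦ dense_im_conj_mul_image_logGroup hli hg)

theorem exists_pos_coeff_norm_sub_lt (ξ : ℂ) {ρ : ℝ} (hρ : 0 < ρ) :
    ∃ p q k : ℤ, 0 < p ∧ ‖p * l₁ + q * l₂ + k * (2 * π * I) - ξ‖ < ρ := by
  obtain ⟨_, hγ₀, hξγ₀⟩ := (dense_logGroup hli).exists_dist_lt ξ (half_pos hρ)
  obtain ⟨p₀, q₀, k₀, rfl⟩ := mem_logGroup.1 hγ₀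
  -- shift by `K` copies of a tiny element with positive first coefficient
  set K : ℕ := (1 - p₀).toNat
  obtain ⟨p₁, q₁, k₁, hp₁, hγ₁⟩ :=
    exists_pos_coeff_norm_lt hli (div_pos hρ (by positivity : (0 : ℝ) < 2 * (K + 1)))
  refine ⟨p₀ + K * p₁, q₀ + K * q₁, k₀ + K * k₁, by nlinarith [Int.self_le_toNat (1 - p₀)], ?_⟩
  have e : ((p₀ + K * p₁ : ℤ) : ℂ) * l₁ + ((q₀ + K * q₁ : ℤ) : ℂ) * l₂ +
      ((k₀ + K * k₁ : ℤ) : ℂ) * (2 * π * I) - ξ =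
      (p₀ * l₁ + q₀ * l₂ + k₀ * (2 * π * I) - ξ) +
        (K : ℂ) * (p₁ * l₁ + q₁ * l₂ + k₁ * (2 * π * I)) := by
    push_cast; ring
  rw [dist_comm, dist_eq_norm] at hξγ₀
  calc _ ≤ ‖p₀ * l₁ + q₀ * l₂ + k₀ * (2 * π * I) - ξ‖ +
        K * ‖p₁ * l₁ + q₁ * l₂ + k₁ * (2 * π * I)‖ := by
        rw [e]
        exact (norm_add_le _ _).trans_eq (by rw [norm_mul, norm_natCast])
    _ ≤ ρ / 2 + K * (ρ / (2 * (K + 1))) := by gcongr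
    _ < ρ := by
      have hK : (0 : ℝ) ≤ K := K.cast_nonneg
      field_simp
      nlinarith

theorem exists_pos_zpow_mul_zpow_norm_sub_lt {u : ℂ} (hu : u ≠ 0) {ρ : ℝ} (hρ : 0 < ρ) :
    ∃ P Q : ℤ, 0 < P ∧ ‖exp l₁ ^ P * exp l₂ ^ Q - u‖ < ρ := by
  obtain ⟨σ, hσ, hexp⟩ := Metric.continuousAt_iff.1 continuous_exp.continuousAt ρ hρ
  obtain ⟨p, q, k, hp, hpqk⟩ := exists_pos_coeff_norm_sub_lt hli (log u) hσ
  refine ⟨p, q, hp, ?_⟩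
  have e : exp (p * l₁ + q * l₂ + k * (2 * π * I)) = exp l₁ ^ p * exp l₂ ^ q := by
    rw [exp_add, exp_add, exp_int_mul, exp_int_mul, exp_int_mul_two_pi_mul_I, mul_one]
  have := hexp (x := p * l₁ + q * l₂ + k * (2 * π * I)) (by rwa [dist_eq_norm])
  rwa [e, exp_log hu, dist_eq_norm] at this

end Independent

theorem norm_add_lt_of_three_mul_inner_le {E : Type*} [NormedAddCommGroup E]
    [InnerProductSpace ℝ E] {y t : E} {δ : ℝ} (hy : ‖y‖ < δ) (ht : 3 * ‖t‖ ≤ δ)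
    (hyt : 3 * ⟪y, t⟫ ≤ -(‖y‖ * ‖t‖)) : ‖y + t‖ < δ := by
  have hsq : ‖y + t‖ ^ 2 < δ ^ 2 := by
    rw [norm_add_sq_real]
    nlinarith [norm_nonneg y, norm_nonneg t]
  exact lt_of_pow_lt_pow_left₀ 2 ((norm_nonneg y).trans hy.le) hsq

theorem exists_two_mul_re_mul_le_neg_norm (d : ℂ) :
    ∃ j : Fin 4, 2 * (d * ![1, -1, I, -I] j).re ≤ -‖d‖ := by
  suffices 2 * d.re ≤ -‖d‖ ∨ 2 * -d.re ≤ -‖d‖ ∨ 2 * -d.im ≤ -‖d‖ ∨ 2 * d.im ≤ -‖d‖ by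
    simpa [Fin.exists_fin_succ] using this
  by_contra! h
  have hre : |d.re| < ‖d‖ / 2 := abs_lt.2 ⟨by linarith, by linarith⟩
  have him : |d.im| < ‖d‖ / 2 := abs_lt.2 ⟨by linarith, by linarith⟩
  linarith [norm_le_abs_re_add_abs_im d]

theorem three_mul_re_mul_le_of_norm_sub_le {d ω ζ : ℂ} {s : ℝ} (hω : ‖ω‖ = 1)
    (hdω : 2 * (d * ω).re ≤ -‖d‖) (hζ : 10 * ‖ζ - s * ω‖ ≤ s) :
    3 * (d * ζ).re ≤ -(‖d‖ * ‖ζ‖) := by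
  have hre : (d * ζ).re ≤ s * (d * ω).re + ‖d‖ * ‖ζ - s * ω‖ := by
    have := re_le_norm (d * (ζ - s * ω))
    rw [norm_mul] at this
    have e : d * ζ = s * (d * ω) + d * (ζ - s * ω) := by ring
    rw [e, add_re, re_ofReal_mul]
    linarith
  have hnorm : ‖ζ‖ ≤ s + ‖ζ - s * ω‖ := by
    have hs : 0 ≤ s := by linarith [norm_nonneg (ζ - s * ω)]
    have := norm_le_norm_add_norm_sub' ζ (s * ω)
    rwa [norm_mul, hω, mul_one, norm_real, Real.norm_of_nonneg hs] at this
  nlinarith [norm_nonneg d, norm_nonneg (ζ - s * ω)]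

theorem exists_bounded_return_time {z w : ℂ} (hz : z ≠ 0) (hw : w ≠ 0)
    (happrox : ∀ u : ℂ, u ≠ 0 → ∀ ρ > 0, ∃ P Q : ℤ, 0 < P ∧ ‖z ^ P * w ^ Q - u‖ < ρ)
    (v : ℂ) {δ : ℝ} (hδ : 0 < δ) :
    ∃ M : ℕ, 0 < M ∧ ∀ m n : ℤ, ‖z ^ m * w ^ n - v‖ < δ →
      ∃ m' n' : ℤ, m < m' ∧ m' ≤ m + M ∧ ‖z ^ m' * w ^ n' - v‖ < δ := by
  set B := ‖v‖ + δ
  have hB : 0 < B := by positivity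
  set s := δ / (4 * B)
  have hs : 0 < s := by positivity
  have hsB : 4 * B * s = δ := by simp only [s]; field_simp
  let ω : Fin 4 → ℂ := ![1, -1, I, -I]
  have hω : ∀ j, ‖ω j‖ = 1 := by intro j; fin_cases j <;> simp [ω]
  have hsω : ∀ j, ‖(s : ℂ) * ω j‖ = s := fun j ↦ by
    rw [norm_mul, hω, mul_one, norm_real, Real.norm_of_nonneg hs.le]
  have hne : ∀ j, 1 + (s : ℂ) * ω j ≠ 0 := fun j h ↦ by
    have : ‖(s : ℂ) * ω j‖ = 1 := by rw [eq_neg_of_add_eq_zero_right h, norm_neg, norm_one]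
    have : δ < 4 * B := by linarith [norm_nonneg v]
    nlinarith [hsω j]
  choose P Q hP hPQ using fun j ↦ happrox _ (hne j) (s / 10) (by positivity)
  set M := ∑ j, (P j).toNat
  have hPM : ∀ j, P j ≤ M := fun j ↦ by
    have := Finset.single_le_sum (f := fun j ↦ (P j).toNat) (fun _ _ ↦ Nat.zero_le _)
      (Finset.mem_univ j)
    omega
  refine ⟨M, by have := hPM 0; have := hP 0; omega, fun m n hmn ↦ ?_⟩
  set x := z ^ m * w ^ n
  obtain ⟨j, hj⟩ := exists_two_mul_re_mul_le_neg_norm (conj (x - v) * x)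
  refine ⟨m + P j, n + Q j, by linarith [hP j], by linarith [hPM j], ?_⟩
  set ζ := z ^ P j * w ^ Q j - 1
  have hζ : 10 * ‖ζ - s * ω j‖ ≤ s := by
    have : ζ - s * ω j = z ^ P j * w ^ Q j - (1 + s * ω j) := by ring
    linarith [this ▸ hPQ j]
  have e : z ^ (m + P j) * w ^ (n + Q j) - v = (x - v) + x * ζ := by
    rw [zpow_add₀ hz, zpow_add₀ hw]; ring
  rw [e]
  refine norm_add_lt_of_three_mul_inner_le hmn ?_ ?_
  · have hx : ‖x‖ ≤ B := by linarith [norm_le_norm_add_norm_sub' x v]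
    have hζs : ‖ζ‖ ≤ s + s / 10 := by
      linarith [hsω j ▸ norm_le_norm_add_norm_sub' ζ (s * ω j)]
    rw [norm_mul]
    nlinarith [norm_nonneg x, norm_nonneg ζ]
  · calc 3 * ⟪x - v, x * ζ⟫ = 3 * (conj (x - v) * x * ζ).re := by rw [Complex.inner]; ring_nf
      _ ≤ -(‖conj (x - v) * x‖ * ‖ζ‖) := three_mul_re_mul_le_of_norm_sub_le (hω j) hj hζ
      _ = -(‖x - v‖ * ‖x * ζ‖) := by rw [norm_mul _ x, norm_conj, norm_mul x ζ, mul_assoc]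

/-- Under the generic independence condition on the eigenvalues
`z = R·e^{ia}`, `w = r·e^{ib}`, for every `v ∈ ℂ` and `δ > 0` there is `M > 0` such
that whenever `|z^m·w^n − v| < δ`, there are `m', n'` with `m < m' ≤ m + M` and
`|z^{m'}·w^{n'} − v| < δ`. -/
theorem recurrence_zpow_mul_zpow
    (R r a b : ℝ) (hR : 0 < R) (hr : 0 < r)
    (hli : LinearIndependent ℚ
      ![Real.pi * Real.log R, Real.pi * Real.log r,
        a * Real.log r - b * Real.log R])
    (z w : ℂ)
    (hz : z = (R : ℂ) * Complex.exp (a * Complex.I))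
    (hw : w = (r : ℂ) * Complex.exp (b * Complex.I)) :
    ∀ v : ℂ, ∀ δ : ℝ, 0 < δ →
      ∃ M : ℕ, 0 < M ∧
        ∀ m n : ℤ, ‖z ^ m * w ^ n - v‖ < δ →
          ∃ m' n' : ℤ, m < m' ∧ m' ≤ m + M ∧
            ‖z ^ m' * w ^ n' - v‖ < δ := by
  set l₁ : ℂ := Real.log R + a * I
  set l₂ : ℂ := Real.log r + b * I
  have hz₁ : z = exp l₁ := by rw [hz, exp_add, ← ofReal_exp, Real.exp_log hR]
  have hw₂ : w = exp l₂ := by rw [hw, exp_add, ← ofReal_exp, Real.exp_log hr]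
  have hl : LinearIndependent ℤ ![π * l₁.re, π * l₂.re, (conj l₂ * l₁).im] := by
    convert hli.restrict_scalars' ℤ using 1
    ext i
    fin_cases i <;> simp [l₁, l₂, mul_comm, neg_add_eq_sub]
  intro v δ hδ
  subst hz₁ hw₂
  exact exists_bounded_return_time (exp_ne_zero _) (exp_ne_zero _)
    (fun _ hu _ hρ ↦ exists_pos_zpow_mul_zpow_norm_sub_lt hl hu hρ) v hδ
end

section
/- Let R, r be positive real numbers and a, b real numbers such that the three real numbers π·log R, π·log r, and a·log r − b·log R are linearly independent over ℚ, and set z = R·e^{ia}, w = r·e^{ib}. Then for every v ∈ ℂ, every δ > 0, and every N ∈ ℕ, there exist a natural number M > 0 and sequences of integers (m_i)_{i≥0} and (n_i)_{i≥0} such that N < m_0 < m_1 < m_2 < ⋯, m_{i+1} − m_i ≤ M for all i, and |z^{m_i}·w^{n_i} − v| < δ for all i ≥ 0. -/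
/-!
Writing `z = exp ζ`, `w = exp ω`, we have `z ^ m * w ^ n = exp (m ζ + n ω + 2πik)` for every
`k`, so it suffices that the `m` with `m ζ ∈ exp⁻¹(ball v δ) + ℤω + 2πiℤ` have bounded gaps.
The independence hypothesis makes `ℤζ + ℤω + 2πiℤ` dense in `ℂ` (a Kronecker-type argument:
a rank-three subgroup of a plane is not discrete, so its closure contains a line, and no
nonzero functional maps it into a cyclic group). Then the multiples of `ζ` are dense in the
compact torus `ℂ / (ℤω + 2πiℤ)`, and in a compact group the return times of a dense cyclic
orbit to an open set have bounded gaps, by a finite subcover.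
-/

open Set Submodule Filter Topology Complex

def SyndeticWith (S : Set ℤ) (M : ℕ) : Prop :=
  ∀ m₀ : ℤ, ∃ m ∈ S, m ∈ Ioc m₀ (m₀ + M)

namespace SyndeticWith

variable {S : Set ℤ} {M : ℕ}

theorem pos (h : SyndeticWith S M) : 0 < M := by
  obtain ⟨m, -, hm⟩ := h 0
  have := hm.1.trans_le hm.2
  omega

theorem exists_strictMono (h : SyndeticWith S M) (N : ℤ) :
    ∃ ms : ℕ → ℤ, N < ms 0 ∧ StrictMono ms ∧ (∀ i, ms (i + 1) - ms i ≤ M) ∧ ∀ i, ms i ∈ S := by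
  choose next hnext hIoc using h
  refine ⟨fun i => next^[i + 1] N, (hIoc N).1, strictMono_nat_of_lt_succ fun i => ?_,
    fun i => ?_, fun i => ?_⟩
  · simp only [Function.iterate_succ_apply']
    exact (hIoc _).1
  · simp only [Function.iterate_succ_apply']
    linarith [(hIoc (next (next^[i] N))).2]
  · simp only [Function.iterate_succ_apply']
    exact hnext _

end SyndeticWith

theorem exists_syndeticWith_zsmul_mem {G : Type*} [AddCommGroup G] [TopologicalSpace G]
    [IsTopologicalAddGroup G] [CompactSpace G] {g : G} (hg : DenseRange fun m : ℤ => m • g)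
    {U : Set G} (hU : IsOpen U) (hne : U.Nonempty) :
    ∃ M, SyndeticWith {m | m • g ∈ U} M := by
  have hcover : univ ⊆ ⋃ j : ℤ, (· + j • g) ⁻¹' U := by
    intro y _
    obtain ⟨u, hu⟩ := hne
    obtain ⟨j, hj⟩ := hg.exists_mem_open (hU.preimage (continuous_const_add y))
      ⟨-y + u, by simpa using hu⟩
    exact mem_iUnion.mpr ⟨j, hj⟩
  obtain ⟨F, hF⟩ := isCompact_univ.elim_finite_subcover _
    (fun j => hU.preimage (continuous_add_const (j • g))) hcover
  set J : ℕ := F.sup Int.natAbs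
  refine ⟨2 * J + 1, fun m₀ => ?_⟩
  obtain ⟨j, hjF, hj⟩ := mem_iUnion₂.mp (hF (mem_univ ((m₀ + J + 1) • g)))
  have hjJ : j.natAbs ≤ J := Finset.le_sup (f := Int.natAbs) hjF
  refine ⟨m₀ + J + 1 + j, by simpa [add_zsmul] using hj, ?_, ?_⟩ <;> push_cast <;> omega

theorem compactSpace_quotient_of_isZLattice {E : Type*} [NormedAddCommGroup E]
    [NormedSpace ℝ E] [FiniteDimensional ℝ E] (L : Submodule ℤ E) [DiscreteTopology L]
    [IsZLattice ℝ L] : CompactSpace (E ⧸ L.toAddSubgroup) where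
  isCompact_univ := by
    simpa [QuotientAddGroup.mk_surjective.range_eq] using
      IsZLattice.isCompact_range_of_periodic L (QuotientAddGroup.mk : E → E ⧸ L.toAddSubgroup)
        QuotientAddGroup.continuous_mk fun x p hp => by
          simpa using (QuotientAddGroup.eq_zero_iff (N := L.toAddSubgroup) p).mpr hp

theorem exists_syndeticWith_zsmul_add_mem {E ι : Type*} [NormedAddCommGroup E]
    [NormedSpace ℝ E] [FiniteDimensional ℝ E] [Finite ι] (b : Module.Basis ι ℝ E) {g : E}
    (hd : Dense (span ℤ (insert g (range b)) : Set E)) {U : Set E} (hU : IsOpen U)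
    (hne : U.Nonempty) :
    ∃ M, SyndeticWith {m | ∃ p ∈ span ℤ (range b), m • g + p ∈ U} M := by
  set P := span ℤ (range b)
  have := compactSpace_quotient_of_isZLattice P
  let π : E → E ⧸ P.toAddSubgroup := QuotientAddGroup.mk
  have hdense : DenseRange fun m : ℤ => m • π g := by
    refine (QuotientAddGroup.mk_surjective.denseRange.dense_image
      QuotientAddGroup.continuous_mk hd).mono ?_
    rintro _ ⟨x, hx, rfl⟩
    obtain ⟨m, p, hp, rfl⟩ := mem_span_insert.mp hx
    exact ⟨m, by simp [π, (QuotientAddGroup.eq_zero_iff (N := P.toAddSubgroup) p).mpr hp]⟩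
  obtain ⟨M, hM⟩ := exists_syndeticWith_zsmul_mem hdense (QuotientAddGroup.isOpenMap_coe U hU)
    (hne.image π)
  refine ⟨M, fun m₀ => ?_⟩
  obtain ⟨m, ⟨y, hyU, hy⟩, hm⟩ := hM m₀
  refine ⟨m, ⟨-(m • g) + y, (QuotientAddGroup.eq (s := P.toAddSubgroup)).mp ?_,
    by simpa using hyU⟩, hm⟩
  simpa [π] using hy.symm

theorem exists_ne_zero_forall_smul_mem_of_zero_mem_closure {E : Type*} [NormedAddCommGroup E]
    [NormedSpace ℝ E] [ProperSpace E] {H : AddSubgroup E} (hH : IsClosed (H : Set E))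
    (h0 : (0 : E) ∈ closure ((H : Set E) \ {0})) : ∃ u ≠ 0, ∀ t : ℝ, t • u ∈ H := by
  obtain ⟨h, hmem, hlim⟩ := (mem_closure_iff_seq_limit (s := (H : Set E) \ {0})).mp h0
  have hpos : ∀ n, 0 < ‖h n‖ := fun n => norm_pos_iff.mpr (hmem n).2
  obtain ⟨u, hu, φ, hφ, hlimu⟩ := (isCompact_sphere (0 : E) 1).tendsto_subseq
    (x := fun n => ‖h n‖⁻¹ • h n) fun n => by simp [norm_smul, (hpos n).ne']
  have hu1 : ‖u‖ = 1 := by simpa using hu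
  refine ⟨u, norm_ne_zero_iff.mp (by simp [hu1]), fun t => ?_⟩
  have hnorm : Tendsto (fun n => ‖h (φ n)‖) atTop (𝓝 0) :=
    (tendsto_norm_zero.comp hlim).comp hφ.tendsto_atTop
  -- `⌊t / ‖h‖⌋ • h` is a point of `H` within `‖h‖` of `t • (h / ‖h‖)`
  have hcoef : Tendsto (fun n => (⌊t / ‖h (φ n)‖⌋ : ℝ) * ‖h (φ n)‖) atTop (𝓝 t) := by
    refine tendsto_of_tendsto_of_tendsto_of_le_of_le
      (by simpa using tendsto_const_nhds.sub hnorm) tendsto_const_nhds (fun n => ?_) (fun n => ?_)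
    · have := Int.sub_one_lt_floor (t / ‖h (φ n)‖)
      rw [div_sub_one (hpos _).ne', div_lt_iff₀ (hpos _)] at this
      exact this.le
    · exact (le_div_iff₀ (hpos _)).mp (Int.floor_le _)
  refine hH.mem_of_tendsto (hcoef.smul hlimu) (Eventually.of_forall fun n => ?_)
  simp only [Function.comp_apply, smul_smul, mul_assoc, mul_inv_cancel₀ (hpos _).ne', mul_one,
    Int.cast_smul_eq_zsmul]
  exact H.zsmul_mem (hmem _).1 _

theorem zero_mem_closure_span_int_diff_singleton {E ι : Type*} [NormedAddCommGroup E]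
    [NormedSpace ℝ E] [FiniteDimensional ℝ E] [Fintype ι] {g : ι → E} (hg : LinearIndependent ℤ g)
    (hcard : Module.finrank ℝ E < Fintype.card ι) :
    (0 : E) ∈ closure ((span ℤ (range g) : Set E) \ {0}) := by
  by_contra h
  have hdisc : DiscreteTopology (span ℤ (range g)) := by
    refine discreteTopology_iff_isOpen_singleton_zero.mpr
      ⟨(closure ((span ℤ (range g) : Set E) \ {0}))ᶜ, isClosed_closure.isOpen_compl, ?_⟩
    ext x
    by_cases hx : x = 0
    · simpa [hx] using h
    · simpa [hx] using subset_closure (show (x : E) ∈ (span ℤ (range g) : Set E) \ {0} from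
        ⟨x.2, by simpa using hx⟩)
  have hrank := Real.finrank_eq_int_finrank_of_discrete hdisc
  rw [Set.finrank, Set.finrank, finrank_span_eq_card hg] at hrank
  have := Submodule.finrank_le (span ℝ (range g))
  omega

theorem Complex.dense_addSubgroup_of_forall_smul_mem {H : AddSubgroup ℂ} {u : ℂ} (hu : u ≠ 0)
    (hline : ∀ t : ℝ, t • u ∈ H) (hd : Dense ((fun x => (u⁻¹ * x).im) '' H)) :
    Dense (H : Set ℂ) := by
  rw [Metric.dense_iff] at hd ⊢
  intro x r hr
  have hupos : 0 < ‖u‖ := norm_pos_iff.mpr hu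
  obtain ⟨_, hball, h, hh, rfl⟩ := hd (u⁻¹ * x).im (r / ‖u‖) (by positivity)
  set q := u⁻¹ * (x - h)
  refine ⟨h + q.re • u, ?_, H.add_mem hh (hline _)⟩
  have hdecomp : x - (h + q.re • u) = u * (q.im * I) := by
    have hq : x - h = u * q := by simp only [q, mul_inv_cancel_left₀ hu]
    rw [real_smul, sub_add_eq_sub_sub, hq]
    linear_combination u * (re_add_im q).symm
  have him : |q.im| < r / ‖u‖ := by
    simpa [q, mul_sub, abs_sub_comm, Real.dist_eq] using hball
  rw [Metric.mem_ball, dist_comm, dist_eq_norm, hdecomp, norm_mul, norm_mul, norm_I,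
    mul_one, norm_real, Real.norm_eq_abs]
  rwa [lt_div_iff₀ hupos, mul_comm] at him

theorem Complex.dense_span_int {ι : Type*} [Fintype ι] {g : ι → ℂ}
    (hcard : 2 < Fintype.card ι) (hg : LinearIndependent ℤ g)
    -- every `ℝ`-linear functional on `ℂ` is `x ↦ (v * x).im` for some `v`
    (hf : ∀ v : ℂ, ∀ c : ℝ, (∀ i, (v * g i).im ∈ AddSubgroup.zmultiples c) → v = 0) :
    Dense (span ℤ (range g) : Set ℂ) := by
  set Λ := (span ℤ (range g)).toAddSubgroup
  set H := Λ.topologicalClosure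
  have h0 : (0 : ℂ) ∈ closure ((H : Set ℂ) \ {0}) :=
    closure_mono (sdiff_subset_sdiff_left Λ.le_topologicalClosure)
      (zero_mem_closure_span_int_diff_singleton hg (by simpa using hcard))
  obtain ⟨u, hu, hline⟩ :=
    exists_ne_zero_forall_smul_mem_of_zero_mem_closure Λ.isClosed_topologicalClosure h0
  let f : ℂ →+ ℝ := imAddGroupHom.comp (AddMonoidHom.mulLeft u⁻¹)
  rcases (Λ.map f).dense_or_cyclic with hd | ⟨c, hc⟩
  · have := dense_addSubgroup_of_forall_smul_mem hu hline
      (hd.mono (image_mono (Λ.le_topologicalClosure : (Λ : Set ℂ) ⊆ H)))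
    rwa [AddSubgroup.topologicalClosure_coe, dense_closure] at this
  · refine absurd (hf u⁻¹ c fun i => ?_) (inv_ne_zero hu)
    rw [AddSubgroup.zmultiples_eq_closure, ← hc]
    exact AddSubgroup.mem_map_of_mem f (subset_span ⟨i, rfl⟩)

theorem LinearIndependent.int_coeffs_eq_zero_of_fin_three {x₀ x₁ x₂ : ℝ}
    (hx : LinearIndependent ℚ ![x₀, x₁, x₂]) {p q s : ℤ} (h : p * x₀ + q * x₁ + s * x₂ = 0) :
    p = 0 ∧ q = 0 ∧ s = 0 := by
  have := Fintype.linearIndependent_iff.mp (hx.restrict_scalars' ℤ) ![p, q, s]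
    (by simpa [Fin.sum_univ_three, zsmul_eq_mul] using h)
  exact ⟨this 0, this 1, this 2⟩

theorem Complex.exp_log_add_mul_I {R : ℝ} (hR : 0 < R) (a : ℝ) :
    exp (Real.log R + a * I) = R * exp (a * I) := by
  rw [exp_add, ← ofReal_exp, Real.exp_log hR]

theorem Complex.linearIndependent_pair_add_mul_I_two_pi_mul_I {ℓ : ℝ} (hℓ : ℓ ≠ 0) (b : ℝ) :
    LinearIndependent ℝ ![(ℓ : ℂ) + b * I, 2 * Real.pi * I] := by
  refine LinearIndependent.pair_iff.mpr fun s t h => ?_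
  have hre : s * ℓ = 0 := by simpa using congrArg re h
  have him : s * b + t * (2 * Real.pi) = 0 := by simpa using congrArg im h
  obtain rfl : s = 0 := (mul_eq_zero.mp hre).resolve_right hℓ
  simpa [Real.pi_ne_zero] using him

section

variable {R r a b : ℝ}
  (hli : LinearIndependent ℚ ![Real.pi * Real.log R, Real.pi * Real.log r,
    a * Real.log r - b * Real.log R])
include hli

theorem log_ne_zero_of_linearIndependent : Real.log r ≠ 0 :=
  right_ne_zero_of_mul (hli.ne_zero 1)

theorem linearIndependent_int_log_add_mul_I :
    LinearIndependent ℤ ![(Real.log R : ℂ) + a * I, (Real.log r : ℂ) + b * I,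
      2 * Real.pi * I] := by
  refine Fintype.linearIndependent_iff.mpr fun c hc => ?_
  have hre : c 0 * Real.log R + c 1 * Real.log r = 0 := by
    simpa [Fin.sum_univ_three] using congrArg re hc
  have him : c 0 * a + c 1 * b + c 2 * (2 * Real.pi) = 0 := by
    simpa [Fin.sum_univ_three] using congrArg im hc
  obtain ⟨-, h2, h0⟩ := hli.int_coeffs_eq_zero_of_fin_three (p := 0) (q := 2 * c 2) (s := c 0)
    (by push_cast; linear_combination Real.log r * him - b * hre)
  have h1 : c 1 = 0 := by
    simpa [h0, log_ne_zero_of_linearIndependent hli] using hre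
  intro i
  fin_cases i <;> simp [h0, h1, show c 2 = 0 by omega]

theorem eq_zero_of_forall_im_mul_mem_zmultiples {v : ℂ} {c : ℝ}
    (h : ∀ i, (v * ![(Real.log R : ℂ) + a * I, (Real.log r : ℂ) + b * I,
      2 * Real.pi * I] i).im ∈ AddSubgroup.zmultiples c) : v = 0 := by
  obtain ⟨k₁, hk₁⟩ := AddSubgroup.mem_zmultiples_iff.mp (h 0)
  obtain ⟨k₂, hk₂⟩ := AddSubgroup.mem_zmultiples_iff.mp (h 1)
  obtain ⟨k₃, hk₃⟩ := AddSubgroup.mem_zmultiples_iff.mp (h 2)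
  replace hk₁ : k₁ * c = v.re * a + v.im * Real.log R := by simpa using hk₁
  replace hk₂ : k₂ * c = v.re * b + v.im * Real.log r := by simpa using hk₂
  replace hk₃ : k₃ * c = v.re * (2 * Real.pi) := by simpa using hk₃
  have hk : k₂ * c = 0 ∧ k₃ * c = 0 := by
    rcases eq_or_ne c 0 with rfl | hc
    · simp
    -- eliminating `v` from the three equations leaves an integer relation
    have hrel : ((-2 * k₂ : ℤ) : ℝ) * (Real.pi * Real.log R) + ((2 * k₁ : ℤ) : ℝ) *
        (Real.pi * Real.log r) + ((-k₃ : ℤ) : ℝ) * (a * Real.log r - b * Real.log R) = 0 := by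
      refine (mul_eq_zero.mp ?_).resolve_left hc
      push_cast
      linear_combination (2 * Real.pi * Real.log r) * hk₁ - (2 * Real.pi * Real.log R) * hk₂
        - (a * Real.log r - b * Real.log R) * hk₃
    obtain ⟨h₂, -, h₃⟩ := hli.int_coeffs_eq_zero_of_fin_three hrel
    simp [show k₂ = 0 by omega, show k₃ = 0 by omega]
  have hre : v.re = 0 := by simpa [hk.2, Real.pi_ne_zero] using hk₃
  have him : v.im = 0 := by
    simpa [hk.1, hre, log_ne_zero_of_linearIndependent hli] using hk₂
  exact Complex.ext hre him

end

theorem zpow_mul_zpow_eq_exp {R r : ℝ} (hR : 0 < R) (hr : 0 < r) (a b : ℝ) (m n k : ℤ) :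
    ((R : ℂ) * exp (a * I)) ^ m * ((r : ℂ) * exp (b * I)) ^ n =
      exp (m • ((Real.log R : ℂ) + a * I) + (n • ((Real.log r : ℂ) + b * I)
        + k • (2 * Real.pi * I))) := by
  simp only [zsmul_eq_mul, exp_add, exp_int_mul, exp_two_pi_mul_I, one_zpow, mul_one,
    exp_log_add_mul_I hR, exp_log_add_mul_I hr]

/-- Under the generic independence condition on `z = R·e^{ia}`,
`w = r·e^{ib}`, for every `v ∈ ℂ`, `δ > 0` and `N ∈ ℕ` there are `M > 0` and
integer sequences `(m_i)`, `(n_i)` with `N < m_0 < m_1 < ⋯`, `m_{i+1} − m_i ≤ M`,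
and `|z^{m_i}·w^{n_i} − v| < δ` for all `i`. -/
theorem bounded_gap_sequence_zpow_mul_zpow
    (R r a b : ℝ) (hR : 0 < R) (hr : 0 < r)
    (hli : LinearIndependent ℚ
      ![Real.pi * Real.log R, Real.pi * Real.log r,
        a * Real.log r - b * Real.log R])
    (z w : ℂ)
    (hz : z = (R : ℂ) * Complex.exp (a * Complex.I))
    (hw : w = (r : ℂ) * Complex.exp (b * Complex.I)) :
    ∀ v : ℂ, ∀ δ : ℝ, 0 < δ → ∀ N : ℕ,
      ∃ M : ℕ, 0 < M ∧ ∃ ms ns : ℕ → ℤ,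
        (N : ℤ) < ms 0 ∧ StrictMono ms ∧
        (∀ i : ℕ, ms (i + 1) - ms i ≤ M) ∧
        (∀ i : ℕ, ‖z ^ ms i * w ^ ns i - v‖ < δ) := by
  intro v δ hδ N
  subst hz hw
  let B : Module.Basis (Fin 2) ℝ ℂ := basisOfLinearIndependentOfCardEqFinrank
    (linearIndependent_pair_add_mul_I_two_pi_mul_I (log_ne_zero_of_linearIndependent hli) b)
    (by simp)
  have hB : ⇑B = ![(Real.log r : ℂ) + b * I, 2 * Real.pi * I] :=
    coe_basisOfLinearIndependentOfCardEqFinrank _ _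
  have hdense : Dense (span ℤ (insert ((Real.log R : ℂ) + a * I) (range B)) : Set ℂ) := by
    rw [← Fin.range_cons, hB]
    exact dense_span_int (by simp) (linearIndependent_int_log_add_mul_I hli)
      fun _ _ h => eq_zero_of_forall_im_mul_mem_zmultiples hli h
  have hexp : DenseRange exp := by rw [DenseRange, range_exp]; exact dense_compl_singleton 0
  obtain ⟨ℓ, hℓ⟩ := hexp.exists_mem_open Metric.isOpen_ball ⟨v, Metric.mem_ball_self hδ⟩
  obtain ⟨M, hM⟩ := exists_syndeticWith_zsmul_add_mem B hdense
    (Metric.isOpen_ball.preimage continuous_exp) ⟨ℓ, hℓ⟩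
  obtain ⟨ms, h0, hmono, hgap, hmem⟩ := hM.exists_strictMono N
  have hns : ∀ i, ∃ n : ℤ,
      ‖((R : ℂ) * exp (a * I)) ^ ms i * ((r : ℂ) * exp (b * I)) ^ n - v‖ < δ := by
    intro i
    obtain ⟨p, hp, hpU⟩ := hmem i
    rw [hB, Matrix.range_cons_cons_empty] at hp
    obtain ⟨n, k, rfl⟩ := mem_span_pair.mp hp
    exact ⟨n, by rw [← dist_eq_norm, zpow_mul_zpow_eq_exp hR hr a b _ n k]; exact hpU⟩
  choose ns hns using hns
  exact ⟨M, hM.pos, ms, ns, h0, hmono, hgap, hns⟩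
end

section
/- Let c, d be real numbers such that 1, c, d are linearly independent over ℚ. Then the set Y = { (m + k·c, n + k·d) : m, n, k ∈ ℤ } is dense in ℝ². -/
/-!
The closure `H` of `Y` is a closed subgroup of `ℝ²`. It is not discrete: the points
`(fract (k c), fract (k d))` of `Y` are pairwise distinct and lie in a bounded set. Rescaling ever
shorter nonzero vectors of `H` to unit length and taking a cluster point `u`, the multiples
`⌊t / ‖h‖⌋ • h` show that the whole line `ℝ u` lies in `H`. For the functional `φ` with kernel
`ℝ u` we then have `H = φ⁻¹(φ H)`, and `φ H` is a subgroup of `ℝ`, hence dense or cyclic. If it is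
dense, so is `H`. If it is `ℤ a`, then `φ (1, 0)`, `φ (0, 1)` and `φ (c, d)` are integer multiples
of `a`, and `φ (c, d) = c φ (1, 0) + d φ (0, 1)` becomes an integer relation between `1, c, d`.
-/

open Filter Topology Metric Set

theorem AddSubgroup.accPt_zero_of_infinite_inter_s4 {E : Type*} [NormedAddCommGroup E]
    [ProperSpace E] (H : AddSubgroup E) (hH : IsClosed (H : Set E)) {K : Set E}
    (hK : Bornology.IsBounded K) (hKH : (K ∩ H).Infinite) : AccPt (0 : E) (𝓟 H) := by
  by_contra h
  have : DiscreteTopology H := discreteTopology_of_isOpen_singleton_zero <| by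
    rw [isOpen_singleton_iff_punctured_nhds, nhds_ne_subtype_eq_bot_iff]
    exact not_neBot.mp h
  exact hKH (finite_isBounded_inter_isClosed (isDiscrete_iff_discreteTopology.mpr this) hK hH)

section LineInClosedSubgroup

variable {E : Type*} [NormedAddCommGroup E] [NormedSpace ℝ E]

lemma norm_floor_div_norm_smul_sub_le (t : ℝ) (x : E) :
    ‖⌊t / ‖x‖⌋ • x - t • (‖x‖⁻¹ • x)‖ ≤ ‖x‖ := by
  rw [← Int.cast_smul_eq_zsmul ℝ, smul_smul, ← div_eq_mul_inv, ← sub_smul, norm_smul,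
    Real.norm_eq_abs, abs_sub_comm, ← Int.fract, Int.abs_fract]
  exact mul_le_of_le_one_left (norm_nonneg x) (Int.fract_lt_one _).le

theorem AddSubgroup.exists_smul_mem_of_accPt_zero [ProperSpace E] (H : AddSubgroup E)
    (hH : IsClosed (H : Set E)) (h0 : AccPt (0 : E) (𝓟 H)) :
    ∃ u : E, u ≠ 0 ∧ ∀ t : ℝ, t • u ∈ H := by
  set F := 𝓝[≠] (0 : E) ⊓ 𝓟 H
  have : F.NeBot := h0
  have hsphere : ∀ᶠ x in F, ‖x‖⁻¹ • x ∈ sphere (0 : E) 1 := by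
    filter_upwards [mem_inf_of_left self_mem_nhdsWithin] with x (hx : x ≠ 0)
    rw [mem_sphere_zero_iff_norm, norm_smul, norm_inv, norm_norm,
      inv_mul_cancel₀ (norm_ne_zero_iff.mpr hx)]
  obtain ⟨u, hu, hclus⟩ := isCompact_sphere (0 : E) 1 (tendsto_principal.mpr hsphere)
  obtain ⟨U, hUF, hUu⟩ := mapClusterPt_iff_ultrafilter.mp hclus
  refine ⟨u, ne_zero_of_mem_unit_sphere ⟨u, hu⟩, fun t => ?_⟩
  have hU0 : (U : Filter E) ≤ 𝓝 0 := hUF.trans (inf_le_left.trans nhdsWithin_le_nhds)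
  have hsmall : Tendsto (fun x => ⌊t / ‖x‖⌋ • x - t • (‖x‖⁻¹ • x)) (U : Filter E) (𝓝 0) :=
    squeeze_zero_norm (norm_floor_div_norm_smul_sub_le t) (tendsto_norm_zero.comp hU0)
  have hlim : Tendsto (fun x => ⌊t / ‖x‖⌋ • x) (U : Filter E) (𝓝 (t • u)) := by
    simpa using hsmall.add (hUu.const_smul t)
  rw [← SetLike.mem_coe, ← hH.closure_eq]
  exact mem_closure_of_tendsto hlim <| (hUF.trans inf_le_right : (U : Filter E) ≤ 𝓟 H)
    (fun x hx => H.zsmul_mem hx _)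

end LineInClosedSubgroup

lemma exists_eq_smul_of_mul_sub_mul_eq_zero {u p : ℝ × ℝ} (hu : u ≠ 0)
    (h : u.2 * p.1 - u.1 * p.2 = 0) : ∃ t : ℝ, p = t • u := by
  have hu' : u.1 ^ 2 + u.2 ^ 2 ≠ 0 := by
    contrapose! hu
    ext <;> simp <;> nlinarith [sq_nonneg u.1, sq_nonneg u.2]
  refine ⟨(u.1 * p.1 + u.2 * p.2) / (u.1 ^ 2 + u.2 ^ 2), Prod.ext ?_ ?_⟩
  · simp only [Prod.smul_fst, smul_eq_mul]
    field_simp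
    linear_combination u.2 * h
  · simp only [Prod.smul_snd, smul_eq_mul]
    field_simp
    linear_combination -u.1 * h

theorem LinearIndependent.eq_zero_of_intCast_add_mul_add_mul_eq_zero {c d : ℝ}
    (hli : LinearIndependent ℚ ![(1 : ℝ), c, d]) {p q r : ℤ}
    (h : (p : ℝ) + q * c + r * d = 0) : p = 0 ∧ q = 0 ∧ r = 0 := by
  have := Fintype.linearIndependent_iff.mp (hli.restrict_scalars' ℤ) ![p, q, r]
    (by simpa [Fin.sum_univ_three] using h)
  exact ⟨this 0, this 1, this 2⟩

def kroneckerLattice (c d : ℝ) : AddSubgroup (ℝ × ℝ) where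
  carrier := {p | ∃ m n k : ℤ, p = ((m : ℝ) + (k : ℝ) * c, (n : ℝ) + (k : ℝ) * d)}
  add_mem' := by
    rintro _ _ ⟨m, n, k, rfl⟩ ⟨m', n', k', rfl⟩
    exact ⟨m + m', n + n', k + k', by
      push_cast
      ext <;> simp only [Prod.fst_add, Prod.snd_add] <;> ring⟩
  zero_mem' := ⟨0, 0, 0, by ext <;> simp⟩
  neg_mem' := by
    rintro _ ⟨m, n, k, rfl⟩
    exact ⟨-m, -n, -k, by
      push_cast
      ext <;> simp only [Prod.fst_neg, Prod.snd_neg] <;> ring⟩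

namespace kroneckerLattice

variable {c d : ℝ}

theorem infinite_ball_inter (hli : LinearIndependent ℚ ![(1 : ℝ), c, d]) :
    (ball (0 : ℝ × ℝ) 1 ∩ kroneckerLattice c d).Infinite := by
  let v : ℤ → ℝ × ℝ := fun k => (Int.fract (k * c), Int.fract (k * d))
  have hv : Function.Injective v := by
    intro k k' h
    obtain ⟨z, hz⟩ := Int.fract_eq_fract.mp (congrArg Prod.fst h)
    have := (hli.eq_zero_of_intCast_add_mul_add_mul_eq_zero (p := -z) (q := k - k') (r := 0)
      (by push_cast; linarith)).2.1
    omega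
  refine (Set.infinite_range_of_injective hv).mono ?_
  rintro _ ⟨k, rfl⟩
  refine ⟨?_, -⌊k * c⌋, -⌊k * d⌋, k, ?_⟩
  · simp only [mem_ball_zero_iff, Prod.norm_def, Real.norm_eq_abs, max_lt_iff, v,
      Int.abs_fract, Int.fract_lt_one, and_self]
  · simp only [v, Int.fract]
    push_cast
    ext <;> ring

theorem eq_zero_of_map_le_zmultiples (hli : LinearIndependent ℚ ![(1 : ℝ), c, d])
    {φ : ℝ × ℝ →ₗ[ℝ] ℝ} {a : ℝ}
    (h : (kroneckerLattice c d).map φ.toAddMonoidHom ≤ AddSubgroup.zmultiples a) : φ = 0 := by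
  have hmem : ∀ m n k : ℤ, ∃ j : ℤ, j • a = φ ((m : ℝ) + k * c, (n : ℝ) + k * d) :=
    fun m n k => h ⟨_, ⟨m, n, k, rfl⟩, rfl⟩
  obtain ⟨p, hp⟩ := hmem 1 0 0
  obtain ⟨q, hq⟩ := hmem 0 1 0
  obtain ⟨r, hr⟩ := hmem 0 0 1
  have hcd : φ (c, d) = c * φ (1, 0) + d * φ (0, 1) := by
    rw [← smul_eq_mul, ← smul_eq_mul, ← map_smul, ← map_smul, ← map_add]
    simp
  simp only [zsmul_eq_mul, Int.cast_one, Int.cast_zero, zero_add, one_mul, zero_mul, add_zero]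
    at hp hq hr
  have hrel : a * (-r + p * c + q * d) = 0 := by
    rw [← hp, ← hq] at hcd
    linear_combination -hcd - hr
  have hpq : (p : ℝ) * a = 0 ∧ (q : ℝ) * a = 0 := by
    rcases mul_eq_zero.mp hrel with ha | hrel
    · simp [ha]
    · obtain ⟨-, rfl, rfl⟩ := hli.eq_zero_of_intCast_add_mul_add_mul_eq_zero (by exact_mod_cast hrel)
      simp
  ext <;> simp [← hp, ← hq, hpq]

end kroneckerLattice

/-- Kronecker: If `1, c, d` are linearly independent over `ℚ`, then
`Y = { (m + k·c, n + k·d) : m, n, k ∈ ℤ }` is dense in `ℝ²`. -/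
theorem dense_kronecker_lattice
    (c d : ℝ) (hli : LinearIndependent ℚ ![(1 : ℝ), c, d]) :
    Dense {p : ℝ × ℝ | ∃ m n k : ℤ,
      p = ((m : ℝ) + (k : ℝ) * c, (n : ℝ) + (k : ℝ) * d)} := by
  show Dense (kroneckerLattice c d : Set (ℝ × ℝ))
  set Y := kroneckerLattice c d
  set H := Y.topologicalClosure
  have hH : IsClosed (H : Set (ℝ × ℝ)) := Y.isClosed_topologicalClosure
  have hYH : Y ≤ H := Y.le_topologicalClosure
  obtain ⟨u, hu, hline⟩ := H.exists_smul_mem_of_accPt_zero hH <|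
    H.accPt_zero_of_infinite_inter_s4 hH isBounded_ball <|
      (kroneckerLattice.infinite_ball_inter hli).mono (inter_subset_inter_right _ hYH)
  let φ : ℝ × ℝ →ₗ[ℝ] ℝ := u.2 • LinearMap.fst ℝ ℝ ℝ - u.1 • LinearMap.snd ℝ ℝ ℝ
  have hφ : φ ≠ 0 := by
    intro h
    have : u.2 * u.2 + u.1 * u.1 = 0 := by simpa [φ] using LinearMap.congr_fun h (u.2, -u.1)
    exact hu (by ext <;> simp <;> nlinarith)
  have hker : φ.toAddMonoidHom.ker ≤ H := fun p hp => by
    obtain ⟨t, rfl⟩ := exists_eq_smul_of_mul_sub_mul_eq_zero hu hp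
    exact hline t
  rcases (H.map φ.toAddMonoidHom).dense_or_cyclic with hdense | ⟨a, ha⟩
  · rw [← dense_closure, ← Y.topologicalClosure_coe]
    have : Dense ((H.map φ.toAddMonoidHom).comap φ.toAddMonoidHom : Set (ℝ × ℝ)) :=
      hdense.preimage (φ.isOpenMap_of_finiteDimensional (LinearMap.surjective hφ))
    rwa [AddSubgroup.comap_map_eq_self hker] at this
  · rw [← AddSubgroup.zmultiples_eq_closure] at ha
    exact absurd (kroneckerLattice.eq_zero_of_map_le_zmultiples hli
      (ha ▸ AddSubgroup.map_mono hYH)) hφ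
end

section
/- Let c, d be real numbers such that 1, c, d are linearly independent over ℚ, and for m, n, k ∈ ℤ write y(m,n,k) = (m + k·c, n + k·d) ∈ ℝ². For every ε > 0 there exists a natural number M > 0 such that: for all integers m, n, k with ‖y(m,n,k)‖ < ε, there exist integers m', n', k' with |m'| ≤ M, |n'| ≤ M, |k'| ≤ M, (m', n', k') ≠ (0,0,0), and ‖y(m+m', n+n', k+k')‖ < ε. -/
/-!
The subgroup `Y` is dense in `ℝ²`. Granting this, each point `x` of the closed `ε`-ball has a
nonzero `y ∈ Y` with `x + y` in the open `ε`-ball, and by compactness finitely many such `y` serve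
the whole ball; `M` bounds their integer coordinates.

Density: compactness of `[0,1]²`, applied to the fractional parts of `(k c, k d)`, gives
arbitrarily small nonzero `w ∈ Y`. The functional `u ↦ det (u, w)`, which kills `w`, maps `Y` onto
a subgroup of `ℝ` that cannot be cyclic because `1, c, d` are `ℚ`-independent, so it is dense.
Hence `Y` reaches any point up to a vector along `w`, and subtracting the nearest integer
multiple of `w` leaves an error of size about `‖w‖`.
-/

open Set Metric

theorem int_coeffs_eq_zero_of_linearIndependent {c d : ℝ}
    (hli : LinearIndependent ℚ ![(1 : ℝ), c, d]) {P Q R : ℤ} (h : P * c + Q * d = R) :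
    P = 0 ∧ Q = 0 := by
  have hcoeffs := Fintype.linearIndependent_iff.1 hli ![-R, P, Q] (by
    simp only [Fin.sum_univ_three, Matrix.cons_val_zero, Matrix.cons_val_one, Matrix.cons_val,
      Rat.smul_def, Rat.cast_neg, Rat.cast_intCast, mul_one]
    linarith)
  exact ⟨by simpa using hcoeffs 1, by simpa using hcoeffs 2⟩

theorem exists_ne_zero_abs_add_mul_lt (c d : ℝ) {ε : ℝ} (hε : 0 < ε) :
    ∃ m n k : ℤ, k ≠ 0 ∧ |m + k * c| < ε ∧ |n + k * d| < ε := by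
  set u : ℕ → ℝ × ℝ := fun j => (Int.fract (j * c), Int.fract (j * d))
  have hu : ∀ j, u j ∈ Icc (0 : ℝ) 1 ×ˢ Icc (0 : ℝ) 1 := fun j =>
    ⟨⟨Int.fract_nonneg _, (Int.fract_lt_one _).le⟩, ⟨Int.fract_nonneg _, (Int.fract_lt_one _).le⟩⟩
  obtain ⟨_, _, φ, hφ, hlim⟩ := (isCompact_Icc.prod isCompact_Icc).tendsto_subseq hu
  obtain ⟨N, hN⟩ := Metric.cauchySeq_iff'.1 hlim.cauchySeq ε hε
  have hclose := hN (N + 1) N.le_succ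
  simp only [Function.comp_apply, Prod.dist_eq, Real.dist_eq, max_lt_iff, u] at hclose
  refine ⟨⌊(φ N : ℝ) * c⌋ - ⌊(φ (N + 1) : ℝ) * c⌋, ⌊(φ N : ℝ) * d⌋ - ⌊(φ (N + 1) : ℝ) * d⌋,
    φ (N + 1) - φ N, by have := hφ (Nat.lt_add_one N); omega, ?_, ?_⟩
  · refine (congrArg abs ?_).trans_lt hclose.1
    simp only [Int.fract]
    push_cast
    ring
  · refine (congrArg abs ?_).trans_lt hclose.2
    simp only [Int.fract]
    push_cast
    ring

def kroneckerHom (c d : ℝ) : ℤ × ℤ × ℤ →+ ℝ × ℝ where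
  toFun t := (t.1 + t.2.2 * c, t.2.1 + t.2.2 * d)
  map_zero' := by simp
  map_add' _ _ := by
    ext <;> simp only [Prod.fst_add, Prod.snd_add, Int.cast_add, Prod.mk_add_mk] <;> ring

@[simp]
theorem kroneckerHom_apply (c d : ℝ) (m n k : ℤ) :
    kroneckerHom c d (m, n, k) = (m + k * c, n + k * d) := rfl

def crossWith (w : ℝ × ℝ) : ℝ × ℝ →ₗ[ℝ] ℝ :=
  w.2 • LinearMap.fst ℝ ℝ ℝ - w.1 • LinearMap.snd ℝ ℝ ℝ

@[simp]
theorem crossWith_apply (w u : ℝ × ℝ) : crossWith w u = u.1 * w.2 - u.2 * w.1 := by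
  simp [crossWith, mul_comm]

theorem dense_crossWith_image_range_kroneckerHom {c d : ℝ}
    (hli : LinearIndependent ℚ ![(1 : ℝ), c, d]) {w : ℝ × ℝ} (hw : w ≠ 0) :
    Dense (crossWith w '' range (kroneckerHom c d)) := by
  set A : AddSubgroup ℝ := ((crossWith w).toAddMonoidHom.comp (kroneckerHom c d)).range
  have hA : (A : Set ℝ) = crossWith w '' range (kroneckerHom c d) := by
    rw [AddMonoidHom.coe_range, ← range_comp]
    rfl
  rw [← hA]
  refine A.dense_or_cyclic.resolve_right ?_
  rintro ⟨t, ht⟩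
  have hmem (m n k : ℤ) : ∃ z : ℤ, z * t = (m + k * c) * w.2 - (n + k * d) * w.1 := by
    have : crossWith w (kroneckerHom c d (m, n, k)) ∈ A := ⟨(m, n, k), rfl⟩
    simpa [ht, AddSubgroup.mem_closure_singleton] using this
  obtain ⟨P, hP⟩ := hmem 1 0 0
  obtain ⟨Q, hQ⟩ := hmem 0 1 0
  obtain ⟨R, hR⟩ := hmem 0 0 1
  simp only [Int.cast_one, Int.cast_zero, zero_mul, one_mul, add_zero, zero_add, sub_zero,
    zero_sub] at hP hQ hR
  have hrel : t * (P * c + Q * d - R) = 0 := by linear_combination c * hP + d * hQ - hR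
  rcases mul_eq_zero.1 hrel with rfl | hrel
  · exact hw (Prod.ext (by simpa using hQ.symm) (by simpa using hP.symm))
  · obtain ⟨rfl, rfl⟩ :=
      int_coeffs_eq_zero_of_linearIndependent hli (P := P) (Q := Q) (R := R) (by linarith)
    exact hw (Prod.ext (by simpa using hQ.symm) (by simpa using hP.symm))

theorem AddSubgroup.dense_of_exists_small_crossWith_dense (G : AddSubgroup (ℝ × ℝ))
    (h : ∀ ε > 0, ∃ w ∈ G, w ≠ 0 ∧ ‖w‖ < ε ∧ Dense (crossWith w '' G)) :
    Dense (G : Set (ℝ × ℝ)) := by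
  rw [Metric.dense_iff]
  intro x r hr
  obtain ⟨w, hwG, hw0, hwr, hdense⟩ := h (r / 2) (by positivity)
  set D := w.1 ^ 2 + w.2 ^ 2 with hD_def
  have hD : 0 < D := by
    by_contra! hD
    exact hw0 (Prod.ext (by rw [Prod.fst_zero]; nlinarith) (by rw [Prod.snd_zero]; nlinarith))
  obtain ⟨_, ⟨g, hgG, rfl⟩, hg⟩ := hdense.exists_dist_lt (crossWith w x) hD
  set u := g - x
  set s := (u.1 * w.1 + u.2 * w.2) / D
  have hs : s * D = u.1 * w.1 + u.2 * w.2 := div_mul_cancel₀ _ hD.ne'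
  clear_value s
  refine ⟨g - round s • w, ?_, G.sub_mem hgG (G.zsmul_mem hwG _)⟩
  set ψ := crossWith w u
  have hψ : |ψ| < D := by
    rwa [dist_comm, Real.dist_eq, ← map_sub] at hg
  -- `u = s • w + (ψ / D) • (w.2, -w.1)`; the second part is small since `|ψ| < D`.
  have key (a b : ℝ) (ha : |a| ≤ ‖w‖) (hb : |b| ≤ ‖w‖) :
      |a * ψ / D + (s - round s) * b| < r :=
    calc |a * ψ / D + (s - round s) * b| ≤ |a| * (|ψ| / D) + |s - round s| * |b| := by
          refine (abs_add_le _ _).trans_eq ?_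
          rw [abs_mul, abs_div, abs_mul, abs_of_pos hD]
          ring
      _ ≤ ‖w‖ * 1 + 1 / 2 * ‖w‖ := by
          gcongr
          · exact (div_le_one hD).2 hψ.le
          · exact abs_sub_round s
      _ < r := by linarith
  rw [mem_ball, dist_eq_norm, sub_right_comm]
  change ‖u - round s • w‖ < r
  rw [Prod.norm_def, max_lt_iff, Real.norm_eq_abs, Real.norm_eq_abs]
  constructor
  · refine (congrArg abs ?_).trans_lt (key w.2 w.1 (norm_snd_le w) (norm_fst_le w))
    simp only [ψ, crossWith_apply, Prod.fst_sub, Prod.smul_fst]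
    rw [zsmul_eq_mul]
    field_simp
    linear_combination -w.1 * hs + (w.1 * s - u.1) * hD_def
  · refine (congrArg abs ?_).trans_lt
      (key (-w.1) w.2 (by rw [abs_neg]; exact norm_fst_le w) (norm_snd_le w))
    simp only [ψ, crossWith_apply, Prod.snd_sub, Prod.smul_snd]
    rw [zsmul_eq_mul]
    field_simp
    linear_combination -w.2 * hs + (w.2 * s - u.2) * hD_def

theorem denseRange_kroneckerHom {c d : ℝ} (hli : LinearIndependent ℚ ![(1 : ℝ), c, d]) :
    DenseRange (kroneckerHom c d) := by
  refine (kroneckerHom c d).range.dense_of_exists_small_crossWith_dense fun ε hε => ?_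
  obtain ⟨m, n, k, hk, hm, hn⟩ := exists_ne_zero_abs_add_mul_lt c d hε
  have hw : kroneckerHom c d (m, n, k) ≠ 0 := fun h => hk <| by
    have hrel : (k : ℝ) * c + (0 : ℤ) * d = (-m : ℤ) := by
      simpa [eq_neg_iff_add_eq_zero, add_comm] using congrArg Prod.fst h
    exact (int_coeffs_eq_zero_of_linearIndependent hli hrel).1
  exact ⟨_, ⟨_, rfl⟩, hw, by simpa [Prod.norm_def] using ⟨hm, hn⟩,
    dense_crossWith_image_range_kroneckerHom hli hw⟩

theorem exists_finset_forall_norm_add_lt {ι E : Type*} [NormedAddCommGroup E] [NormedSpace ℝ E]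
    [Nontrivial E] [ProperSpace E] {f : ι → E} (hf : DenseRange f) {ε : ℝ} (hε : 0 < ε) :
    ∃ T : Finset ι, (∀ t ∈ T, f t ≠ 0) ∧ ∀ x : E, ‖x‖ ≤ ε → ∃ t ∈ T, ‖x + f t‖ < ε := by
  have hcover : closedBall (0 : E) ε ⊆ ⋃ t ∈ {t | f t ≠ 0}, ball (-f t) ε := by
    intro x _
    obtain ⟨_, ⟨⟨t, rfl⟩, ht⟩, hxt⟩ := (hf.sdiff_singleton 0).exists_dist_lt (-x) hε
    refine mem_biUnion ht ?_
    rwa [mem_ball, ← dist_neg_neg, neg_neg]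
  obtain ⟨T, hT, hTfin, hTcover⟩ := (isCompact_closedBall (0 : E) ε).elim_finite_subcover_image
    (fun _ _ => isOpen_ball) hcover
  refine ⟨hTfin.toFinset, fun t ht => hT (hTfin.mem_toFinset.1 ht), fun x hx => ?_⟩
  obtain ⟨t, ht, hxt⟩ := mem_iUnion₂.1 (hTcover (mem_closedBall_zero_iff.2 hx))
  exact ⟨t, hTfin.mem_toFinset.2 ht, by rwa [mem_ball_iff_norm, sub_neg_eq_add] at hxt⟩

/-- Bounded-step recurrence for the dense subgroup
`Y = { (m + k·c, n + k·d) }` of `ℝ²` (Euclidean norm): for every `ε > 0` there is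
`M > 0` such that any lattice point of the subgroup in the ε-ball can be moved to
another one by a nonzero step of size at most `M` in the integer coordinates. -/
theorem kronecker_lattice_recurrence
    (c d : ℝ) (hli : LinearIndependent ℚ ![(1 : ℝ), c, d])
    (y : ℤ → ℤ → ℤ → WithLp 2 (ℝ × ℝ))
    (hy : ∀ m n k : ℤ, y m n k = (WithLp.equiv 2 (ℝ × ℝ)).symm ((m : ℝ) + (k : ℝ) * c, (n : ℝ) + (k : ℝ) * d)) :
    ∀ ε : ℝ, 0 < ε →
      ∃ M : ℕ, 0 < M ∧
        ∀ m n k : ℤ, ‖y m n k‖ < ε →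
          ∃ m' n' k' : ℤ, |m'| ≤ M ∧ |n'| ≤ M ∧ |k'| ≤ M ∧
            (m', n', k') ≠ (0, 0, 0) ∧
            ‖y (m + m') (n + n') (k + k')‖ < ε := by
  intro ε hε
  have hyL (t : ℤ × ℤ × ℤ) : y t.1 t.2.1 t.2.2 = WithLp.toLp 2 (kroneckerHom c d t) := hy _ _ _
  have hdense : DenseRange fun t : ℤ × ℤ × ℤ => y t.1 t.2.1 t.2.2 := by
    simp only [hyL]
    exact (WithLp.toLp_surjective 2).denseRange.comp (denseRange_kroneckerHom hli)
      (WithLp.prod_continuous_toLp 2 ℝ ℝ)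
  obtain ⟨T, hT0, hT⟩ := exists_finset_forall_norm_add_lt hdense hε
  refine ⟨T.sup (fun t => max t.1.natAbs (max t.2.1.natAbs t.2.2.natAbs)) + 1, by omega, ?_⟩
  intro m n k hmnk
  obtain ⟨t, ht, hlt⟩ := hT (y m n k) hmnk.le
  obtain ⟨h₁, h₂, h₃⟩ : _ ∧ _ ∧ _ := by
    simpa only [max_le_iff] using
      Finset.le_sup (f := fun t => max t.1.natAbs (max t.2.1.natAbs t.2.2.natAbs)) ht
  refine ⟨t.1, t.2.1, t.2.2, ?_, ?_, ?_, fun h => hT0 t ht ?_, ?_⟩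
  iterate 3 · rw [Int.abs_eq_natAbs]; omega
  · rw [show t = 0 from h, hyL, map_zero, WithLp.toLp_zero]
  · have hadd : y (m + t.1) (n + t.2.1) (k + t.2.2) = y m n k + y t.1 t.2.1 t.2.2 := by
      rw [hyL (m, n, k), hyL t, ← WithLp.toLp_add, ← map_add]
      exact hyL ((m, n, k) + t)
    rwa [hadd]
end

section
/- Let X ⊆ ℂ be a Lebesgue-measurable set. Suppose there exist constants λ > 1, ρ > 0, C̃ > 0, an integer M ≥ 1, and ε₀ > 0 such that for every ε ∈ (0, ε₀) there are a natural number m₀ with λ^{−m₀} ≥ C̃·ε and points c_j ∈ ℂ (j ∈ ℕ) for which the open balls B(c_j, ρ·λ^{−(m₀ + jM)}) (j ∈ ℕ) are pairwise disjoint and each is contained in X ∩ B(0, ε). Then liminf_{ε→0} m(X ∩ B(0,ε)) / m(B(0,ε)) > 0, where m denotes Lebesgue measure on ℂ ≅ ℝ². -/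
/-! The ball `B(c₀, ρ λ^{-m₀}) ⊆ X ∩ B(0, ε)` has radius at least `ρ C̃ ε`, so by the scaling
of Haar measure it fills at least the fraction `(ρ C̃)²` of `B(0, ε)`. -/

open MeasureTheory Filter Metric Module

section HaarBallRatio

variable {E : Type*} [NormedAddCommGroup E] [NormedSpace ℝ E] [MeasurableSpace E] [BorelSpace E]
  [FiniteDimensional ℝ E] (μ : Measure E) [μ.IsAddHaarMeasure]

theorem addHaar_ball_div_addHaar_ball (x y : E) {r s : ℝ} (hr : 0 < r) (hs : 0 < s) :
    μ (ball x r) / μ (ball y s) = ENNReal.ofReal ((r / s) ^ finrank ℝ E) := by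
  rw [μ.addHaar_ball_of_pos x hr, μ.addHaar_ball_of_pos y hs,
    ENNReal.mul_div_mul_right _ _ (measure_ball_pos μ 0 one_pos).ne' measure_ball_lt_top.ne,
    ← ENNReal.ofReal_div_of_pos (by positivity), div_pow]

theorem ofReal_pow_finrank_le_addHaar_div_addHaar_ball {S : Set E} {x : E} (y : E)
    {a r s : ℝ} (ha : 0 < a) (hs : 0 < s) (har : a * s ≤ r) (hsub : ball x r ⊆ S) :
    ENNReal.ofReal (a ^ finrank ℝ E) ≤ μ S / μ (ball y s) := by
  have hr : 0 < r := (mul_pos ha hs).trans_le har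
  calc ENNReal.ofReal (a ^ finrank ℝ E)
      ≤ ENNReal.ofReal ((r / s) ^ finrank ℝ E) := by
        gcongr
        rwa [le_div_iff₀ hs]
    _ = μ (ball x r) / μ (ball y s) := (addHaar_ball_div_addHaar_ball μ x y hr hs).symm
    _ ≤ μ S / μ (ball y s) := by gcongr

theorem liminf_addHaar_div_addHaar_ball_pos {S : ℝ → Set E} (y : E) {a : ℝ} (ha : 0 < a)
    (h : ∀ᶠ s in nhdsWithin 0 (Set.Ioi 0), ∃ x r, a * s ≤ r ∧ ball x r ⊆ S s) :
    0 < liminf (fun s => μ (S s) / μ (ball y s)) (nhdsWithin 0 (Set.Ioi 0)) := by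
  have hbound : ∀ᶠ s in nhdsWithin 0 (Set.Ioi 0),
      ENNReal.ofReal (a ^ finrank ℝ E) ≤ μ (S s) / μ (ball y s) := by
    filter_upwards [h, self_mem_nhdsWithin] with s ⟨x, r, har, hsub⟩ hs
    exact ofReal_pow_finrank_le_addHaar_div_addHaar_ball μ y ha hs har hsub
  calc 0 < ENNReal.ofReal (a ^ finrank ℝ E) := ENNReal.ofReal_pos.2 (by positivity)
    _ ≤ _ := le_liminf_of_le (by isBoundedDefault) hbound

end HaarBallRatio

theorem positive_inferior_density_of_disjoint_balls_general
    (X : Set ℂ)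
    (lam ρ Ctil : ℝ) (hρ : 0 < ρ) (hCtil : 0 < Ctil)
    (M : ℕ) (ε₀ : ℝ) (hε₀ : 0 < ε₀)
    (h : ∀ ε : ℝ, 0 < ε → ε < ε₀ →
      ∃ m₀ : ℕ, Ctil * ε ≤ lam ^ (-(m₀ : ℤ)) ∧
        ∃ c : ℕ → ℂ,
          (Pairwise (Function.onFun Disjoint
            (fun j : ℕ => Metric.ball (c j) (ρ * lam ^ (-((m₀ + j * M : ℕ) : ℤ)))))) ∧
          (∀ j : ℕ, Metric.ball (c j) (ρ * lam ^ (-((m₀ + j * M : ℕ) : ℤ))) ⊆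
            X ∩ Metric.ball (0 : ℂ) ε)) :
    0 < Filter.liminf
      (fun ε : ℝ =>
        volume (X ∩ Metric.ball (0 : ℂ) ε) / volume (Metric.ball (0 : ℂ) ε))
      (nhdsWithin 0 (Set.Ioi 0)) := by
  refine liminf_addHaar_div_addHaar_ball_pos volume 0 (mul_pos hρ hCtil) ?_
  filter_upwards [Ioo_mem_nhdsGT hε₀] with ε ⟨hε, hεε₀⟩
  obtain ⟨m₀, hm₀, c, -, hsub⟩ := h ε hε hεε₀
  refine ⟨c 0, ρ * lam ^ (-(m₀ : ℤ)), ?_, by simpa using hsub 0⟩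
  rw [mul_assoc]
  exact mul_le_mul_of_nonneg_left hm₀ hρ.le

/-- If a measurable set `X ⊆ ℂ` contains, at every small scale `ε`,
a family of pairwise disjoint balls `B(c_j, ρ·λ^{−(m₀+jM)})` inside `X ∩ B(0,ε)`
with `λ^{−m₀} ≥ C̃·ε`, then `X` has positive inferior density at `0`. -/
theorem positive_inferior_density_of_disjoint_balls
    (X : Set ℂ) (hX : MeasurableSet X)
    (lam ρ Ctil : ℝ) (hlam : 1 < lam) (hρ : 0 < ρ) (hCtil : 0 < Ctil)
    (M : ℕ) (hM : 1 ≤ M) (ε₀ : ℝ) (hε₀ : 0 < ε₀)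
    (h : ∀ ε : ℝ, 0 < ε → ε < ε₀ →
      ∃ m₀ : ℕ, Ctil * ε ≤ lam ^ (-(m₀ : ℤ)) ∧
        ∃ c : ℕ → ℂ,
          (Pairwise (Function.onFun Disjoint
            (fun j : ℕ => Metric.ball (c j) (ρ * lam ^ (-((m₀ + j * M : ℕ) : ℤ)))))) ∧
          (∀ j : ℕ, Metric.ball (c j) (ρ * lam ^ (-((m₀ + j * M : ℕ) : ℤ))) ⊆
            X ∩ Metric.ball (0 : ℂ) ε)) :
    0 < Filter.liminf
      (fun ε : ℝ =>
        volume (X ∩ Metric.ball (0 : ℂ) ε) / volume (Metric.ball (0 : ℂ) ε))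
      (nhdsWithin 0 (Set.Ioi 0)) :=
  positive_inferior_density_of_disjoint_balls_general X lam ρ Ctil hρ hCtil M ε₀ hε₀ h
end
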